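/- arXiv:1204.2917 — 8 statements merged into one kernel-verified Lean document; each statement's English description precedes it below -/
import Mathlib

section
/- Let P_0, …, P_m be a symmetric Clifford system on ℝ^{2l} and let F(x) = ‖x‖⁴ − 2 ∑_{i=0}^m ⟨P_i x, x⟩². Then F satisfies the first Cartan–Münzner equation of degree 4: for every x ∈ ℝ^{2l}, ‖∇F(x)‖² = 16‖x‖⁶. -/
/-!
With `cᵢ = ⟪Pᵢ x, x⟫`, the gradient is `∇F(x) = 4‖x‖²x − 8S` where `S = ∑ cᵢ Pᵢ x`.
The Clifford relations make the vectors `Pᵢ x` pairwise orthogonal of norm `‖x‖`, so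
`‖S‖² = ‖x‖² ∑ cᵢ² = ‖x‖² ⟪x, S⟫`. Expanding,
`‖∇F(x)‖² = 16‖x‖⁶ − 64‖x‖²⟪x, S⟫ + 64‖S‖² = 16‖x‖⁶`.
-/

open RealInnerProductSpace

section InnerProductSpace

variable {E : Type*} [NormedAddCommGroup E] [InnerProductSpace ℝ E]

theorem norm_sum_smul_sq_of_inner_eq_ite {ι : Type*} [Fintype ι] [DecidableEq ι] {v : ι → E}
    {r : ℝ} (hv : ∀ i j, ⟪v i, v j⟫ = if i = j then r else 0) (c : ι → ℝ) :
    ‖∑ i, c i • v i‖ ^ 2 = r * ∑ i, c i ^ 2 := by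
  rw [← real_inner_self_eq_norm_sq, sum_inner, Finset.mul_sum]
  refine Finset.sum_congr rfl fun i _ => ?_
  simp [inner_sum, real_inner_smul_left, real_inner_smul_right, hv]
  ring

variable [CompleteSpace E]

section Gradient

variable {f g : E → ℝ} {f' g' x : E}

theorem HasGradientAt.sub (hf : HasGradientAt f f' x) (hg : HasGradientAt g g' x) :
    HasGradientAt (fun y => f y - g y) (f' - g') x := by
  rw [hasGradientAt_iff_hasFDerivAt, map_sub]
  exact hf.hasFDerivAt.sub hg.hasFDerivAt

theorem HasGradientAt.const_mul (c : ℝ) (hf : HasGradientAt f f' x) :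
    HasGradientAt (fun y => c * f y) (c • f') x := by
  rw [hasGradientAt_iff_hasFDerivAt, map_smul]
  exact hf.hasFDerivAt.const_mul c

theorem HasGradientAt.sum {ι : Type*} {u : Finset ι} {f : ι → E → ℝ} {f' : ι → E}
    (hf : ∀ i ∈ u, HasGradientAt (f i) (f' i) x) :
    HasGradientAt (fun y => ∑ i ∈ u, f i y) (∑ i ∈ u, f' i) x := by
  rw [hasGradientAt_iff_hasFDerivAt, map_sum]
  exact HasFDerivAt.fun_sum fun i hi => (hf i hi).hasFDerivAt

theorem HasGradientAt.pow (n : ℕ) (hf : HasGradientAt f f' x) :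
    HasGradientAt (fun y => f y ^ n) ((n * f x ^ (n - 1)) • f') x := by
  rw [hasGradientAt_iff_hasFDerivAt, map_smul]
  simpa only [nsmul_eq_mul] using hf.hasFDerivAt.pow n

theorem IsSelfAdjoint.hasGradientAt_inner_apply_self {T : E →L[ℝ] E} (hT : IsSelfAdjoint T)
    (x : E) : HasGradientAt (fun y => ⟪T y, y⟫) ((2 : ℝ) • T x) x := by
  refine (T.hasFDerivAt.inner ℝ (hasFDerivAt_id x)).congr_fderiv ?_
  ext v
  simp only [ContinuousLinearMap.comp_apply, ContinuousLinearMap.prod_apply,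
    ContinuousLinearMap.id_apply, id_eq, fderivInnerCLM_apply, two_smul, map_add, add_apply,
    InnerProductSpace.toDual_apply_apply, add_right_inj]
  exact (hT.isSymmetric v x).trans (real_inner_comm _ _)

theorem hasGradientAt_norm_pow_four (x : E) :
    HasGradientAt (fun y => ‖y‖ ^ 4) ((4 * ‖x‖ ^ 2) • x) x := by
  convert ((IsSelfAdjoint.one (R := E →L[ℝ] E)).hasGradientAt_inner_apply_self x).pow 2 using 1
  · ext y
    simp only [one_apply_eq_self, real_inner_self_eq_norm_sq]
    ring
  · simp only [one_apply_eq_self, real_inner_self_eq_norm_sq, smul_smul]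
    congr 1
    norm_num
    ring

end Gradient

section Clifford

variable {ι : Type*}

structure IsSymmetricCliffordSystem [DecidableEq ι] (A : ι → E →L[ℝ] E) : Prop where
  isSelfAdjoint : ∀ i, IsSelfAdjoint (A i)
  anticomm : ∀ i j, A i * A j + A j * A i = if i = j then 2 else 0

theorem IsSelfAdjoint.inner_mul_add_mul_apply_self {A B : E →L[ℝ] E} (hA : IsSelfAdjoint A)
    (hB : IsSelfAdjoint B) (x : E) : ⟪(A * B + B * A) x, x⟫ = 2 * ⟪A x, B x⟫ := by
  have hAB : ⟪A (B x), x⟫ = ⟪B x, A x⟫ := hA.isSymmetric _ _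
  have hBA : ⟪B (A x), x⟫ = ⟪A x, B x⟫ := hB.isSymmetric _ _
  rw [add_apply, mul_apply_eq_comp, mul_apply_eq_comp, inner_add_left, hAB, hBA,
    real_inner_comm (A x)]
  ring

theorem IsSymmetricCliffordSystem.inner_apply_apply [DecidableEq ι] {A : ι → E →L[ℝ] E}
    (hA : IsSymmetricCliffordSystem A) (i j : ι) (x : E) :
    ⟪A i x, A j x⟫ = if i = j then ‖x‖ ^ 2 else 0 := by
  have h := (hA.isSelfAdjoint i).inner_mul_add_mul_apply_self (hA.isSelfAdjoint j) x
  rw [hA.anticomm] at h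
  split_ifs at h ⊢ with hij
  · subst hij
    rw [real_inner_self_eq_norm_sq]
    simp only [ContinuousLinearMap.ofNat_apply, two_smul, inner_add_left,
      real_inner_self_eq_norm_sq] at h
    linarith
  · simpa using h.symm

variable [Fintype ι]

def fkmPolynomial (A : ι → E →L[ℝ] E) (y : E) : ℝ :=
  ‖y‖ ^ 4 - 2 * ∑ i, ⟪A i y, y⟫ ^ 2

theorem hasGradientAt_fkmPolynomial {A : ι → E →L[ℝ] E} (hA : ∀ i, IsSelfAdjoint (A i))
    (x : E) :
    HasGradientAt (fkmPolynomial A)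
      ((4 * ‖x‖ ^ 2) • x - (8 : ℝ) • ∑ i, ⟪A i x, x⟫ • A i x) x := by
  have hsum := HasGradientAt.sum (u := Finset.univ) fun i _ =>
    ((hA i).hasGradientAt_inner_apply_self x).pow 2
  convert (hasGradientAt_norm_pow_four x).sub (hsum.const_mul 2) using 2
  · rfl
  · rw [Finset.smul_sum, Finset.smul_sum]
    refine Finset.sum_congr rfl fun i _ => ?_
    simp only [Nat.cast_ofNat, Nat.add_one_sub_one, pow_one]
    module

theorem IsSymmetricCliffordSystem.norm_gradient_fkmPolynomial_sq [DecidableEq ι]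
    {A : ι → E →L[ℝ] E} (hA : IsSymmetricCliffordSystem A) (x : E) :
    ‖gradient (fkmPolynomial A) x‖ ^ 2 = 16 * ‖x‖ ^ 6 := by
  rw [(hasGradientAt_fkmPolynomial hA.isSelfAdjoint x).gradient]
  set S := ∑ i, ⟪A i x, x⟫ • A i x
  have hxS : ⟪x, S⟫ = ∑ i, ⟪A i x, x⟫ ^ 2 := by
    simp [S, inner_sum, real_inner_smul_right, real_inner_comm x, sq]
  have hSS : ‖S‖ ^ 2 = ‖x‖ ^ 2 * ∑ i, ⟪A i x, x⟫ ^ 2 :=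
    norm_sum_smul_sq_of_inner_eq_ite (hA.inner_apply_apply · · x) _
  rw [norm_sub_sq_real, norm_smul, norm_smul, mul_pow, mul_pow, hSS, real_inner_smul_left,
    real_inner_smul_right, hxS]
  simp only [norm_mul, Real.norm_ofNat, norm_pow, norm_norm]
  ring

end Clifford

end InnerProductSpace

theorem Matrix.isSymmetricCliffordSystem_toEuclideanCLM {n ι : Type*} [Fintype n]
    [DecidableEq n] [DecidableEq ι] {P : ι → Matrix n n ℝ} (hsymm : ∀ i, (P i).IsSymm)
    (hcliff : ∀ i j, P i * P j + P j * P i = if i = j then 2 else 0) :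
    IsSymmetricCliffordSystem fun i => Matrix.toEuclideanCLM (𝕜 := ℝ) (P i) where
  isSelfAdjoint i :=
    (Matrix.isHermitian_iff_isSelfAdjoint.mp (Matrix.isHermitian_iff_isSymm.mpr (hsymm i))).map _
  anticomm i j := by
    rw [← map_mul, ← map_mul, ← map_add, hcliff]
    split_ifs
    · exact map_ofNat _ 2
    · exact map_zero _

/-- The FKM polynomial `F(x) = ‖x‖⁴ − 2 ∑ ⟨P_i x, x⟩²` of a
symmetric Clifford system on `ℝ^{2l}` satisfies the first Cartan–Münzner
equation of degree 4: `‖∇F(x)‖² = 16 ‖x‖⁶` for every `x`. -/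
theorem fkm_polynomial_first_cartan_munzner
    (l m : ℕ) (P : Fin (m + 1) → Matrix (Fin (2 * l)) (Fin (2 * l)) ℝ)
    (hsymm : ∀ i, (P i).IsSymm)
    (hcliff : ∀ i j, P i * P j + P j * P i =
      if i = j then (2 : Matrix (Fin (2 * l)) (Fin (2 * l)) ℝ) else 0)
    (x : EuclideanSpace ℝ (Fin (2 * l))) :
    ‖gradient (fun y : EuclideanSpace ℝ (Fin (2 * l)) =>
        ‖y‖ ^ 4 - 2 * ∑ i, ⟪Matrix.toEuclideanLin (P i) y, y⟫ ^ 2) x‖ ^ 2 =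
      16 * ‖x‖ ^ 6 :=
  -- `toEuclideanCLM (P i) y` and `toEuclideanLin (P i) y` agree definitionally
  (Matrix.isSymmetricCliffordSystem_toEuclideanCLM hsymm hcliff).norm_gradient_fkmPolynomial_sq x
end

section
/- Let P_0, …, P_m be a symmetric Clifford system on ℝ^{2l}, let F(x) = ‖x‖⁴ − 2 ∑_{i=0}^m ⟨P_i x, x⟩², and let x ∈ ℝ^{2l} with ‖x‖ = 1. Then F(x) = −1 if and only if there exist real numbers c_0, …, c_m with ∑ c_i² = 1 such that (∑_{i=0}^m c_i P_i) x = x. In other words, the focal set M_− = F^{-1}(−1) ∩ S^{2l−1} consists exactly of the unit vectors fixed by some element of the Clifford sphere Σ(P_0,…,P_m). -/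
open Matrix

section Aux
variable {n : ℕ}

lemma mySum_mulVec {ι : Type*} (s : Finset ι) (f : ι → Matrix (Fin n) (Fin n) ℝ)
    (x : Fin n → ℝ) : (∑ i ∈ s, f i) *ᵥ x = ∑ i ∈ s, f i *ᵥ x := by
  induction s using Finset.cons_induction with
  | empty => simp [Matrix.zero_mulVec]
  | cons a s ha ih => simp [Finset.sum_cons, Matrix.add_mulVec, ih]

lemma mySum_dotProduct {ι : Type*} (s : Finset ι) (f : ι → (Fin n → ℝ))
    (x : Fin n → ℝ) : (∑ i ∈ s, f i) ⬝ᵥ x = ∑ i ∈ s, f i ⬝ᵥ x := by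
  induction s using Finset.cons_induction with
  | empty => simp
  | cons a s ha ih => simp [Finset.sum_cons, add_dotProduct, ih]

lemma clifford_sq {m : ℕ} (P : Fin (m + 1) → Matrix (Fin n) (Fin n) ℝ)
    (hcliff : ∀ i j, P i * P j + P j * P i =
      if i = j then (2 : Matrix (Fin n) (Fin n) ℝ) else 0)
    (c : Fin (m + 1) → ℝ) :
    (∑ i, c i • P i) * (∑ i, c i • P i) = (∑ i, c i ^ 2) • (1 : Matrix (Fin n) (Fin n) ℝ) := by
  have expand : (∑ i, c i • P i) * (∑ i, c i • P i)
      = ∑ i, ∑ j, (c i * c j) • (P i * P j) := by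
    rw [Finset.sum_mul_sum]
    refine Finset.sum_congr rfl fun i _ => Finset.sum_congr rfl fun j _ => ?_
    rw [smul_mul_assoc, mul_smul_comm, smul_smul]
  have expand' : (∑ i, c i • P i) * (∑ i, c i • P i)
      = ∑ i, ∑ j, (c i * c j) • (P j * P i) := by
    rw [expand, Finset.sum_comm]
    refine Finset.sum_congr rfl fun i _ => Finset.sum_congr rfl fun j _ => ?_
    rw [mul_comm (c j)]
  have key : (∑ i, c i • P i) * (∑ i, c i • P i) + (∑ i, c i • P i) * (∑ i, c i • P i)
      = (2 : ℝ) • ((∑ i, c i ^ 2) • (1 : Matrix (Fin n) (Fin n) ℝ)) := by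
    nth_rewrite 1 [expand]
    nth_rewrite 1 [expand']
    rw [← Finset.sum_add_distrib]
    simp_rw [← Finset.sum_add_distrib, ← smul_add, hcliff]
    calc (∑ i, ∑ j, (c i * c j) • (if i = j then (2 : Matrix (Fin n) (Fin n) ℝ) else 0))
        = ∑ i, (c i ^ 2) • (2 : Matrix (Fin n) (Fin n) ℝ) := by
          refine Finset.sum_congr rfl fun i _ => ?_
          rw [Finset.sum_eq_single i]
          · simp [sq]
          · intro b _ hb; simp [Ne.symm hb]
          · intro h; exact absurd (Finset.mem_univ i) h
      _ = (∑ i, c i ^ 2) • (2 : Matrix (Fin n) (Fin n) ℝ) := (Finset.sum_smul).symm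
      _ = (2 : ℝ) • ((∑ i, c i ^ 2) • (1 : Matrix (Fin n) (Fin n) ℝ)) := by
          rw [show (2 : Matrix (Fin n) (Fin n) ℝ) = (2 : ℝ) • (1 : Matrix (Fin n) (Fin n) ℝ) by rw [two_smul, one_add_one_eq_two]]
          rw [smul_comm]
  have h2 : (2 : ℝ) • ((∑ i, c i • P i) * (∑ i, c i • P i))
      = (2 : ℝ) • ((∑ i, c i ^ 2) • (1 : Matrix (Fin n) (Fin n) ℝ)) := by
    rw [two_smul]; exact key
  exact smul_right_injective _ (two_ne_zero) h2

end Aux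

section Main
variable {n m : ℕ}

lemma sphere_symm (P : Fin (m + 1) → Matrix (Fin n) (Fin n) ℝ)
    (hsymm : ∀ i, (P i).IsSymm) (c : Fin (m + 1) → ℝ) :
    (∑ i, c i • P i)ᵀ = ∑ i, c i • P i := by
  rw [Matrix.transpose_sum]
  exact Finset.sum_congr rfl fun i _ => by rw [Matrix.transpose_smul, hsymm i]

lemma sphere_mulVec_dot (P : Fin (m + 1) → Matrix (Fin n) (Fin n) ℝ)
    (c : Fin (m + 1) → ℝ) (x : Fin n → ℝ) :
    (∑ i, c i • P i) *ᵥ x ⬝ᵥ x = ∑ i, c i * ((P i) *ᵥ x ⬝ᵥ x) := by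
  rw [mySum_mulVec, mySum_dotProduct]
  exact Finset.sum_congr rfl fun i _ => by
    rw [Matrix.smul_mulVec, smul_dotProduct, smul_eq_mul]

lemma sphere_mulVec_self_dot (P : Fin (m + 1) → Matrix (Fin n) (Fin n) ℝ)
    (hsymm : ∀ i, (P i).IsSymm)
    (hcliff : ∀ i j, P i * P j + P j * P i =
      if i = j then (2 : Matrix (Fin n) (Fin n) ℝ) else 0)
    (c : Fin (m + 1) → ℝ) (x : Fin n → ℝ) :
    ((∑ i, c i • P i) *ᵥ x) ⬝ᵥ ((∑ i, c i • P i) *ᵥ x) = (∑ i, c i ^ 2) * (x ⬝ᵥ x) := by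
  have h1 : ((∑ i, c i • P i) *ᵥ x) ᵥ* (∑ i, c i • P i)
      = (∑ i, c i • P i) *ᵥ ((∑ i, c i • P i) *ᵥ x) := by
    conv_lhs => rw [← sphere_symm P hsymm c]
    rw [Matrix.vecMul_transpose, sphere_symm P hsymm c]
  rw [Matrix.dotProduct_mulVec, h1, Matrix.mulVec_mulVec, clifford_sq P hcliff c,
    Matrix.smul_mulVec, Matrix.one_mulVec, smul_dotProduct, smul_eq_mul]

lemma dot_sq_le (u v : Fin n → ℝ) : (u ⬝ᵥ v) ^ 2 ≤ (u ⬝ᵥ u) * (v ⬝ᵥ v) := by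
  have := Finset.sum_mul_sq_le_sq_mul_sq Finset.univ u v
  simpa [dotProduct, sq, Finset.mul_sum, mul_comm, mul_assoc, mul_left_comm] using this

end Main

/-- For the FKM polynomial `F(x) = ‖x‖⁴ − 2 ∑ ⟨P_i x, x⟩²` of a
symmetric Clifford system on `ℝ^{2l}` and a unit vector `x`, one has
`F(x) = −1` iff `x` is fixed by some element `∑ c_i P_i` (with `∑ c_i² = 1`)
of the Clifford sphere `Σ(P_0,…,P_m)`. -/
theorem fkm_focal_Mminus_characterization
    (l m : ℕ) (P : Fin (m + 1) → Matrix (Fin (2 * l)) (Fin (2 * l)) ℝ)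
    (hsymm : ∀ i, (P i).IsSymm)
    (hcliff : ∀ i j, P i * P j + P j * P i =
      if i = j then (2 : Matrix (Fin (2 * l)) (Fin (2 * l)) ℝ) else 0)
    (x : Fin (2 * l) → ℝ) (hx : x ⬝ᵥ x = 1) :
    (x ⬝ᵥ x) ^ 2 - 2 * ∑ i, ((P i).mulVec x ⬝ᵥ x) ^ 2 = -1 ↔
      ∃ c : Fin (m + 1) → ℝ, ∑ i, (c i) ^ 2 = 1 ∧
        (∑ i, c i • P i).mulVec x = x := by
  set a : Fin (m + 1) → ℝ := fun i => (P i) *ᵥ x ⬝ᵥ x with ha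
  constructor
  · intro h
    have hs : ∑ i, a i ^ 2 = 1 := by rw [hx] at h; linarith
    refine ⟨a, hs, ?_⟩
    set Q := ∑ i, a i • P i with hQ
    have hdot : Q *ᵥ x ⬝ᵥ x = 1 := by
      rw [sphere_mulVec_dot]
      rw [← hs]
      exact Finset.sum_congr rfl fun i _ => by rw [sq]
    have hQQ : (Q *ᵥ x) ⬝ᵥ (Q *ᵥ x) = 1 := by
      rw [sphere_mulVec_self_dot P hsymm hcliff a x, hs, hx, one_mul]
    have hzero : (Q *ᵥ x - x) ⬝ᵥ (Q *ᵥ x - x) = 0 := by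
      rw [sub_dotProduct, dotProduct_sub, dotProduct_sub,
        hQQ, hx, hdot, dotProduct_comm x (Q *ᵥ x), hdot]
      ring
    have := dotProduct_self_eq_zero.mp hzero
    exact sub_eq_zero.mp this
  · rintro ⟨c, hc, hfix⟩
    set s : ℝ := ∑ i, a i ^ 2 with hsdef
    have h1 : ∑ i, c i * a i = 1 := by
      rw [← sphere_mulVec_dot P c x, hfix, hx]
    have hge : 1 ≤ s := by
      have := Finset.sum_mul_sq_le_sq_mul_sq Finset.univ c a
      rw [h1, hc, one_mul] at this
      simpa using this
    have hle : s ≤ 1 := by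
      set Q' := ∑ i, a i • P i with hQ'
      have hdot : Q' *ᵥ x ⬝ᵥ x = s := by
        rw [sphere_mulVec_dot, hsdef]
        exact Finset.sum_congr rfl fun i _ => by rw [sq]
      have hQQ : (Q' *ᵥ x) ⬝ᵥ (Q' *ᵥ x) = s := by
        rw [sphere_mulVec_self_dot P hsymm hcliff a x, hx, mul_one]
      have hcs := dot_sq_le (Q' *ᵥ x) x
      rw [hdot, hQQ, hx, mul_one] at hcs
      nlinarith
    have : s = 1 := le_antisymm hle hge
    rw [hx, this]
    ring
end

section
/- Let P_0, P_1, P_2, P_3, P_4 be a symmetric Clifford system on ℝ^{16} with P_0 P_1 P_2 P_3 P_4 = Id_{16}, and let x ∈ ℝ^{16} satisfy ‖x‖ = 1 and ⟨P_i x, x⟩ = 0 for all i = 0, …, 4. Then the ten vectors P_i P_j x, 0 ≤ i < j ≤ 4, form an orthonormal set in ℝ^{16} (and hence an orthonormal basis of the 10-dimensional tangent space of the focal submanifold M_+ at x). -/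
/-!
Since `P_i` is symmetric, `⟨P_i P_j x, P_k P_n x⟩ = ⟨P_j P_i P_k P_n x, x⟩`. Using `P_a² = 1` and
anticommutation, the word `P_j P_i P_k P_n` is `1` when `(i, j) = (k, n)`, and otherwise it is
`±P_a P_b` with `a ≠ b` (a skew-symmetric matrix, whose quadratic form vanishes) or a product of
four distinct `P`'s. In the last case, reordering anticommuting factors only changes signs, so the
product of all five in any order is `±P_0 ⋯ P_4 = ±1`; hence the product of four of them is `±P_e`
for the missing index `e`, and `⟨P_e x, x⟩ = 0` on `M₊`.
-/

open Matrix

section AnticommutingFamily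

variable {ι R : Type*} [Ring R] {P : ι → R}

theorem mul_self_eq_one_of_clifford [DecidableEq ι] [Module ℚ R]
    (hcliff : ∀ i j, P i * P j + P j * P i = if i = j then 2 else 0) (i : ι) :
    P i * P i = 1 := by
  have h : (2 : ℚ) • (P i * P i) = (2 : ℚ) • 1 := by
    rw [two_smul, two_smul, hcliff, if_pos rfl, one_add_one_eq_two]
  exact smul_right_injective R two_ne_zero h

theorem mul_eq_neg_mul_of_clifford [DecidableEq ι]
    (hcliff : ∀ i j, P i * P j + P j * P i = if i = j then 2 else 0) {i j : ι} (hij : i ≠ j) :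
    P i * P j = -(P j * P i) :=
  eq_neg_of_add_eq_zero_left (by rw [hcliff, if_neg hij])

theorem List.Perm.prod_map_eq_or_eq_neg (hanti : ∀ i j, i ≠ j → P i * P j = -(P j * P i))
    {l l' : List ι} (h : l.Perm l') (hl : l.Nodup) :
    (l.map P).prod = (l'.map P).prod ∨ (l.map P).prod = -(l'.map P).prod := by
  induction h with
  | nil => exact .inl rfl
  | cons a _ ih =>
    rcases ih (List.nodup_cons.mp hl).2 with h | h <;> simp [h]
  | swap a b l =>
    have hba : b ≠ a := fun h => (List.nodup_cons.mp hl).1 (h ▸ List.mem_cons_self ..)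
    right
    simp only [List.map_cons, List.prod_cons, ← mul_assoc, hanti b a hba, neg_mul]
  | trans h₁₂ _ ih₁₂ ih₂₃ =>
    rcases ih₁₂ hl with h | h <;> rcases ih₂₃ (h₁₂.nodup_iff.mp hl) with h' | h' <;>
      simp [h, h']

theorem mul_mul_eq_neg_of_anticomm (hanti : ∀ i j, i ≠ j → P i * P j = -(P j * P i))
    (hsq : ∀ i, P i * P i = 1) {a b : ι} (hab : a ≠ b) : P a * P b * P a = -P b := by
  rw [hanti a b hab, neg_mul, mul_assoc, hsq, mul_one]

theorem exists_prod_map_eq_or_eq_neg {m : ℕ} {P : Fin m → R}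
    (hanti : ∀ i j, i ≠ j → P i * P j = -(P j * P i)) (hsq : ∀ i, P i * P i = 1)
    (hprod : ((List.finRange m).map P).prod = 1) {l : List (Fin m)} (hl : l.Nodup)
    (hlen : l.length + 1 = m) :
    ∃ e, (l.map P).prod = P e ∨ (l.map P).prod = -P e := by
  obtain ⟨e, -, he⟩ : ∃ e ∈ Finset.univ, e ∉ l.toFinset :=
    Finset.exists_mem_notMem_of_card_lt_card (by simp [List.toFinset_card_of_nodup hl]; omega)
  have hel : (e :: l).Nodup := List.nodup_cons.mpr ⟨List.mem_toFinset.not.mp he, hl⟩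
  have hperm : (e :: l).Perm (List.finRange m) := by
    refine List.perm_of_nodup_nodup_toFinset_eq hel (List.nodup_finRange m) ?_
    rw [List.toFinset_finRange]
    exact Finset.eq_univ_of_card _ (by rw [List.toFinset_card_of_nodup hel]; simpa using hlen)
  have key : (l.map P).prod = P e * ((e :: l).map P).prod := by
    rw [List.map_cons, List.prod_cons, ← mul_assoc, hsq, one_mul]
  refine ⟨e, ?_⟩
  rcases hperm.prod_map_eq_or_eq_neg hanti hel with h | h
  · left; rw [key, h, hprod, mul_one]
  · right; rw [key, h, hprod, mul_neg, mul_one]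

end AnticommutingFamily

section Matrices

variable {m R : Type*} [Fintype m] [CommRing R]

theorem mulVec_dotProduct_mulVec (A B : Matrix m m R) (x y : m → R) :
    (A *ᵥ x) ⬝ᵥ (B *ᵥ y) = x ⬝ᵥ ((Aᵀ * B) *ᵥ y) := by
  rw [← mulVec_mulVec, dotProduct_mulVec x, vecMul_transpose]

theorem dotProduct_mulVec_self_eq_zero_of_transpose_eq_neg [IsAddTorsionFree R]
    {A : Matrix m m R} (hA : Aᵀ = -A) (x : m → R) : x ⬝ᵥ (A *ᵥ x) = 0 := by
  refine self_eq_neg.mp ?_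
  conv_lhs => rw [dotProduct_mulVec, ← mulVec_transpose, hA, dotProduct_comm, neg_mulVec,
    dotProduct_neg]

theorem dotProduct_mul_mulVec_eq_zero [IsAddTorsionFree R] {ι : Type*} {P : ι → Matrix m m R}
    (hsymm : ∀ i, (P i).IsSymm)
    (hanti : ∀ i j, i ≠ j → P i * P j = -(P j * P i)) {a b : ι} (hab : a ≠ b) (x : m → R) :
    x ⬝ᵥ ((P a * P b) *ᵥ x) = 0 :=
  dotProduct_mulVec_self_eq_zero_of_transpose_eq_neg
    (by rw [transpose_mul, (hsymm a).eq, (hsymm b).eq, hanti b a hab.symm]) x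

theorem dotProduct_prod_mulVec_eq_zero [DecidableEq m] {n : ℕ} {P : Fin n → Matrix m m R}
    (hanti : ∀ i j, i ≠ j → P i * P j = -(P j * P i)) (hsq : ∀ i, P i * P i = 1)
    (hprod : ((List.finRange n).map P).prod = 1) {x : m → R}
    (hfocal : ∀ i, x ⬝ᵥ (P i *ᵥ x) = 0) {l : List (Fin n)} (hl : l.Nodup)
    (hlen : l.length + 1 = n) :
    x ⬝ᵥ ((l.map P).prod *ᵥ x) = 0 := by
  obtain ⟨e, he | he⟩ := exists_prod_map_eq_or_eq_neg hanti hsq hprod hl hlen <;>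
    simp [he, hfocal, neg_mulVec]

theorem dotProduct_mul_mul_mul_mulVec_eq_zero [DecidableEq m] [IsAddTorsionFree R]
    {P : Fin 5 → Matrix m m R}
    (hsymm : ∀ i, (P i).IsSymm) (hsq : ∀ i, P i * P i = 1)
    (hanti : ∀ i j, i ≠ j → P i * P j = -(P j * P i))
    (hprod : ((List.finRange 5).map P).prod = 1) {x : m → R}
    (hfocal : ∀ i, x ⬝ᵥ (P i *ᵥ x) = 0) {i j k n : Fin 5} (hij : i ≠ j) (hkn : k ≠ n)
    (hne : ¬(i = k ∧ j = n)) (hne' : ¬(i = n ∧ j = k)) :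
    x ⬝ᵥ ((P j * P i * P k * P n) *ᵥ x) = 0 := by
  have hskew := fun {a b : Fin 5} (hab : a ≠ b) => dotProduct_mul_mulVec_eq_zero hsymm hanti hab x
  have hsandwich {a b : Fin 5} (hab : a ≠ b) := mul_mul_eq_neg_of_anticomm hanti hsq hab
  by_cases hik : i = k
  · subst hik
    rw [mul_assoc (P j), hsq, mul_one]
    exact hskew fun h => hne ⟨rfl, h⟩
  by_cases hjn : j = n
  · subst hjn
    have : P j * P i * P k * P j = P j * P i * P j * (P j * P k * P j) := by
      conv_lhs => rw [← mul_one (P j * P i), ← hsq j]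
      simp only [mul_assoc]
    rw [this, hsandwich (Ne.symm hij), hsandwich hkn.symm, neg_mul_neg]
    exact hskew hik
  by_cases hjk : j = k
  · subst hjk
    rw [hsandwich (Ne.symm hij), neg_mul, neg_mulVec, dotProduct_neg,
      hskew fun h => hne' ⟨h, rfl⟩, neg_zero]
  by_cases hin : i = n
  · subst hin
    rw [mul_assoc (P j) (P i), mul_assoc (P j), hsandwich (Ne.symm hkn), mul_neg, neg_mulVec,
      dotProduct_neg, hskew hjk, neg_zero]
  have hl : [j, i, k, n].Nodup := by simp [*, Ne.symm hij]
  simpa [mul_assoc] using dotProduct_prod_mulVec_eq_zero hanti hsq hprod hfocal hl rfl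

end Matrices

/-- For a symmetric Clifford system `P_0, …, P_4` on `ℝ^{16}` with
`P_0 P_1 P_2 P_3 P_4 = Id` and a point `x` of the focal submanifold `M₊`
(`‖x‖ = 1` and `⟨P_i x, x⟩ = 0` for all `i`), the ten vectors `P_i P_j x`
(`i < j`) form an orthonormal set in `ℝ^{16}`. -/
theorem fkm_43_homogeneous_orthonormal_tangent_basis
    (P : Fin 5 → Matrix (Fin 16) (Fin 16) ℝ)
    (hsymm : ∀ i, (P i).IsSymm)
    (hcliff : ∀ i j, P i * P j + P j * P i =
      if i = j then (2 : Matrix (Fin 16) (Fin 16) ℝ) else 0)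
    (hprod : P 0 * P 1 * P 2 * P 3 * P 4 = 1)
    (x : Fin 16 → ℝ) (hx : x ⬝ᵥ x = 1)
    (hfocal : ∀ i, (P i).mulVec x ⬝ᵥ x = 0) :
    ∀ i j k n : Fin 5, i < j → k < n →
      ((P i * P j).mulVec x) ⬝ᵥ ((P k * P n).mulVec x) =
        if i = k ∧ j = n then 1 else 0 := by
  have hsq := mul_self_eq_one_of_clifford hcliff
  have hanti i j (hij : i ≠ j) := mul_eq_neg_mul_of_clifford hcliff hij
  have hprod' : ((List.finRange 5).map P).prod = 1 := by
    simpa [List.finRange_succ, mul_assoc] using hprod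
  have hfocal' i : x ⬝ᵥ (P i *ᵥ x) = 0 := by rw [dotProduct_comm, hfocal]
  intro i j k n hij hkn
  rw [mulVec_dotProduct_mulVec, transpose_mul, (hsymm i).eq, (hsymm j).eq, ← mul_assoc]
  split_ifs with h
  · obtain ⟨rfl, rfl⟩ := h
    rw [mul_assoc (P j), hsq, mul_one, hsq, one_mulVec, hx]
  · exact dotProduct_mul_mul_mul_mulVec_eq_zero hsymm hsq hanti hprod' hfocal' hij.ne hkn.ne h
      (fun h' => by omega)
end

section
/- Let P_0, P_1, P_2, P_3, P_4 be a symmetric Clifford system on ℝ^{16} such that the trace of P_0 P_1 P_2 P_3 P_4 equals 0. Then there exists x ∈ ℝ^{16} with ‖x‖ = 1 and ⟨P_i x, x⟩ = 0 for all i = 0, …, 4, such that P_0 P_1 P_2 P_3 P_4 x ≠ x and P_0 P_1 P_2 P_3 P_4 x ≠ −x. -/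
open Matrix

theorem fkm_aux_sq (P : Fin 5 → Matrix (Fin 16) (Fin 16) ℝ)
    (hcliff : ∀ i j, P i * P j + P j * P i =
      if i = j then (2 : Matrix (Fin 16) (Fin 16) ℝ) else 0)
    (i : Fin 5) : P i * P i = 1 := by
  have h := hcliff i i
  simp only [if_pos rfl] at h
  have h2 : (2:ℝ) • (P i * P i) = (2:ℝ) • (1 : Matrix (Fin 16) (Fin 16) ℝ) := by
    rw [two_smul, two_smul]
    rw [h]
    norm_num
  exact smul_right_injective _ (two_ne_zero) h2

theorem fkm_aux_anti (P : Fin 5 → Matrix (Fin 16) (Fin 16) ℝ)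
    (hcliff : ∀ i j, P i * P j + P j * P i =
      if i = j then (2 : Matrix (Fin 16) (Fin 16) ℝ) else 0)
    (i j : Fin 5) (hij : i ≠ j) : P j * P i = -(P i * P j) := by
  have h := hcliff i j
  rw [if_neg hij] at h
  exact eq_neg_of_add_eq_zero_right h

theorem matrix_ne_zero_exists_mulVec (A : Matrix (Fin 16) (Fin 16) ℝ) (h : A ≠ 0) :
    ∃ v, A *ᵥ v ≠ 0 := by
  by_contra hc
  push_neg at hc
  apply h
  ext i j
  have := congrFun (hc (Pi.single j 1)) i
  simpa [mulVec_single] using this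

theorem dot_self_pos (v : Fin 16 → ℝ) (h : v ≠ 0) : 0 < v ⬝ᵥ v := by
  have h0 : 0 ≤ v ⬝ᵥ v := Finset.sum_nonneg fun i _ => mul_self_nonneg (v i)
  rcases lt_or_eq_of_le h0 with h'|h'
  · exact h'
  · exact absurd (dotProduct_self_eq_zero.mp h'.symm) h

/-- For a symmetric Clifford system `P_0, …, P_4` on `ℝ^{16}` with
`Trace (P_0 P_1 P_2 P_3 P_4) = 0`, there is a point `x` of the focal
submanifold `M₊` (`‖x‖ = 1`, `⟨P_i x, x⟩ = 0` for all `i`) with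
`P_0 P_1 P_2 P_3 P_4 x ≠ ± x`. -/
theorem fkm_43_inhomogeneous_exists_nonfixed_point
    (P : Fin 5 → Matrix (Fin 16) (Fin 16) ℝ)
    (hsymm : ∀ i, (P i).IsSymm)
    (hcliff : ∀ i j, P i * P j + P j * P i =
      if i = j then (2 : Matrix (Fin 16) (Fin 16) ℝ) else 0)
    (htrace : (P 0 * P 1 * P 2 * P 3 * P 4).trace = 0) :
    ∃ x : Fin 16 → ℝ, x ⬝ᵥ x = 1 ∧ (∀ i, (P i).mulVec x ⬝ᵥ x = 0) ∧
      (P 0 * P 1 * P 2 * P 3 * P 4).mulVec x ≠ x ∧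
      (P 0 * P 1 * P 2 * P 3 * P 4).mulVec x ≠ -x := by
  -- abbreviations
  set A := P 0 with hA
  set B := P 1 with hB
  set C := P 2 with hC
  set D := P 3 with hD
  set E := P 4 with hE
  -- squares
  have sA : A * A = 1 := fkm_aux_sq P hcliff 0
  have sB : B * B = 1 := fkm_aux_sq P hcliff 1
  have sC : C * C = 1 := fkm_aux_sq P hcliff 2
  have sD : D * D = 1 := fkm_aux_sq P hcliff 3
  have sE : E * E = 1 := fkm_aux_sq P hcliff 4
  have sA' : ∀ X, A * (A * X) = X := fun X => by rw [← mul_assoc, sA, one_mul]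
  have sB' : ∀ X, B * (B * X) = X := fun X => by rw [← mul_assoc, sB, one_mul]
  have sC' : ∀ X, C * (C * X) = X := fun X => by rw [← mul_assoc, sC, one_mul]
  have sD' : ∀ X, D * (D * X) = X := fun X => by rw [← mul_assoc, sD, one_mul]
  have sE' : ∀ X, E * (E * X) = X := fun X => by rw [← mul_assoc, sE, one_mul]
  -- anticommutation, oriented to sort indices increasing
  have aBA : B * A = -(A * B) := fkm_aux_anti P hcliff 0 1 (by decide)
  have aCA : C * A = -(A * C) := fkm_aux_anti P hcliff 0 2 (by decide)
  have aDA : D * A = -(A * D) := fkm_aux_anti P hcliff 0 3 (by decide)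
  have aEA : E * A = -(A * E) := fkm_aux_anti P hcliff 0 4 (by decide)
  have aCB : C * B = -(B * C) := fkm_aux_anti P hcliff 1 2 (by decide)
  have aDB : D * B = -(B * D) := fkm_aux_anti P hcliff 1 3 (by decide)
  have aEB : E * B = -(B * E) := fkm_aux_anti P hcliff 1 4 (by decide)
  have aDC : D * C = -(C * D) := fkm_aux_anti P hcliff 2 3 (by decide)
  have aEC : E * C = -(C * E) := fkm_aux_anti P hcliff 2 4 (by decide)
  have aED : E * D = -(D * E) := fkm_aux_anti P hcliff 3 4 (by decide)
  have aBA' : ∀ X, B * (A * X) = -(A * (B * X)) := fun X => by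
    rw [← mul_assoc, aBA, neg_mul, mul_assoc]
  have aCA' : ∀ X, C * (A * X) = -(A * (C * X)) := fun X => by
    rw [← mul_assoc, aCA, neg_mul, mul_assoc]
  have aDA' : ∀ X, D * (A * X) = -(A * (D * X)) := fun X => by
    rw [← mul_assoc, aDA, neg_mul, mul_assoc]
  have aEA' : ∀ X, E * (A * X) = -(A * (E * X)) := fun X => by
    rw [← mul_assoc, aEA, neg_mul, mul_assoc]
  have aCB' : ∀ X, C * (B * X) = -(B * (C * X)) := fun X => by
    rw [← mul_assoc, aCB, neg_mul, mul_assoc]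
  have aDB' : ∀ X, D * (B * X) = -(B * (D * X)) := fun X => by
    rw [← mul_assoc, aDB, neg_mul, mul_assoc]
  have aEB' : ∀ X, E * (B * X) = -(B * (E * X)) := fun X => by
    rw [← mul_assoc, aEB, neg_mul, mul_assoc]
  have aDC' : ∀ X, D * (C * X) = -(C * (D * X)) := fun X => by
    rw [← mul_assoc, aDC, neg_mul, mul_assoc]
  have aEC' : ∀ X, E * (C * X) = -(C * (E * X)) := fun X => by
    rw [← mul_assoc, aEC, neg_mul, mul_assoc]
  have aED' : ∀ X, E * (D * X) = -(D * (E * X)) := fun X => by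
    rw [← mul_assoc, aED, neg_mul, mul_assoc]
  set Q := A * B * C * D * E with hQ
  -- key algebraic identities via sorting
  have hQQ : Q * Q = 1 := by
    rw [hQ]
    simp only [mul_assoc, mul_neg, neg_mul, neg_neg, mul_one,
      sA, sB, sC, sD, sE, sA', sB', sC', sD', sE',
      aBA, aCA, aDA, aEA, aCB, aDB, aEB, aDC, aEC, aED,
      aBA', aCA', aDA', aEA', aCB', aDB', aEB', aDC', aEC', aED']
  have hQA : Q * A = A * Q := by
    rw [hQ]
    simp only [mul_assoc, mul_neg, neg_mul, neg_neg, mul_one,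
      sA, sB, sC, sD, sE, sA', sB', sC', sD', sE',
      aBA, aCA, aDA, aEA, aCB, aDB, aEB, aDC, aEC, aED,
      aBA', aCA', aDA', aEA', aCB', aDB', aEB', aDC', aEC', aED']
  have hQB : Q * B = B * Q := by
    rw [hQ]
    simp only [mul_assoc, mul_neg, neg_mul, neg_neg, mul_one,
      sA, sB, sC, sD, sE, sA', sB', sC', sD', sE',
      aBA, aCA, aDA, aEA, aCB, aDB, aEB, aDC, aEC, aED,
      aBA', aCA', aDA', aEA', aCB', aDB', aEB', aDC', aEC', aED']
  have hQC : Q * C = C * Q := by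
    rw [hQ]
    simp only [mul_assoc, mul_neg, neg_mul, neg_neg, mul_one,
      sA, sB, sC, sD, sE, sA', sB', sC', sD', sE',
      aBA, aCA, aDA, aEA, aCB, aDB, aEB, aDC, aEC, aED,
      aBA', aCA', aDA', aEA', aCB', aDB', aEB', aDC', aEC', aED']
  have hQD : Q * D = D * Q := by
    rw [hQ]
    simp only [mul_assoc, mul_neg, neg_mul, neg_neg, mul_one,
      sA, sB, sC, sD, sE, sA', sB', sC', sD', sE',
      aBA, aCA, aDA, aEA, aCB, aDB, aEB, aDC, aEC, aED,
      aBA', aCA', aDA', aEA', aCB', aDB', aEB', aDC', aEC', aED']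
  have hQE : Q * E = E * Q := by
    rw [hQ]
    simp only [mul_assoc, mul_neg, neg_mul, neg_neg, mul_one,
      sA, sB, sC, sD, sE, sA', sB', sC', sD', sE',
      aBA, aCA, aDA, aEA, aCB, aDB, aEB, aDC, aEC, aED,
      aBA', aCA', aDA', aEA', aCB', aDB', aEB', aDC', aEC', aED']

  -- transposes
  have tA : Aᵀ = A := (hsymm 0).eq
  have tB : Bᵀ = B := (hsymm 1).eq
  have tC : Cᵀ = C := (hsymm 2).eq
  have tD : Dᵀ = D := (hsymm 3).eq
  have tE : Eᵀ = E := (hsymm 4).eq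
  have tQ : Qᵀ = Q := by
    rw [hQ]
    simp only [transpose_mul, tA, tB, tC, tD, tE]
    simp only [mul_assoc, mul_neg, neg_mul, neg_neg, mul_one,
      sA, sB, sC, sD, sE, sA', sB', sC', sD', sE',
      aBA, aCA, aDA, aEA, aCB, aDB, aEB, aDC, aEC, aED,
      aBA', aCA', aDA', aEA', aCB', aDB', aEB', aDC', aEC', aED']
  -- symmetric dot product moves
  have symdot : ∀ (M : Matrix (Fin 16) (Fin 16) ℝ), Mᵀ = M →
      ∀ y z : Fin 16 → ℝ, (M *ᵥ y) ⬝ᵥ z = y ⬝ᵥ (M *ᵥ z) := by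
    intro M hM y z
    rw [dotProduct_mulVec, ← mulVec_transpose, hM]
  -- trace facts
  have htrA : A.trace = 0 := by
    have h1 : B * A * B = -A := by
      simp only [mul_assoc, mul_neg, neg_mul, neg_neg, mul_one,
        sA, sB, sC, sD, sE, sA', sB', sC', sD', sE',
        aBA, aCA, aDA, aEA, aCB, aDB, aEB, aDC, aEC, aED,
        aBA', aCA', aDA', aEA', aCB', aDB', aEB', aDC', aEC', aED']
    have h2 : (B * A * B).trace = A.trace := by
      rw [trace_mul_cycle, sB, one_mul]
    rw [h1, trace_neg] at h2
    linarith
  have hQA' : Q * A = B * C * D * E := by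
    rw [hQ]
    simp only [mul_assoc, mul_neg, neg_mul, neg_neg, mul_one,
      sA, sB, sC, sD, sE, sA', sB', sC', sD', sE',
      aBA, aCA, aDA, aEA, aCB, aDB, aEB, aDC, aEC, aED,
      aBA', aCA', aDA', aEA', aCB', aDB', aEB', aDC', aEC', aED']
  have htrQA : (Q * A).trace = 0 := by
    rw [hQA']
    have h1 : B * (B * C * D * E) * B = -(B * C * D * E) := by
      simp only [mul_assoc, mul_neg, neg_mul, neg_neg, mul_one,
        sA, sB, sC, sD, sE, sA', sB', sC', sD', sE',
        aBA, aCA, aDA, aEA, aCB, aDB, aEB, aDC, aEC, aED,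
        aBA', aCA', aDA', aEA', aCB', aDB', aEB', aDC', aEC', aED']
    have h2 : (B * (B * C * D * E) * B).trace = (B * C * D * E).trace := by
      rw [trace_mul_cycle, sB, one_mul]
    rw [h1, trace_neg] at h2
    linarith
  -- the projections (up to scalar)
  have commQA : A * (1 + Q) = (1 + Q) * A := by
    rw [mul_add, add_mul, mul_one, one_mul, hQA]
  have commQA' : A * (1 - Q) = (1 - Q) * A := by
    rw [mul_sub, sub_mul, mul_one, one_mul, hQA]
  -- a-vector: Q a = a, A a = a
  have hMp_tr : ((1 + Q) * (1 + A)).trace = 16 := by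
    have : (1 + Q) * (1 + A) = 1 + A + Q + Q * A := by noncomm_ring
    rw [this, trace_add, trace_add, trace_add, htrA, htrQA, htrace, trace_one]
    norm_num
  have hMp_ne : (1 + Q) * (1 + A) ≠ 0 := by
    intro h
    rw [h, trace_zero] at hMp_tr
    norm_num at hMp_tr
  obtain ⟨u, hu⟩ := matrix_ne_zero_exists_mulVec _ hMp_ne
  set a0 : Fin 16 → ℝ := ((1 + Q) * (1 + A)) *ᵥ u with ha0
  have hQa0 : Q *ᵥ a0 = a0 := by
    rw [ha0, mulVec_mulVec, ← mul_assoc,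
      show Q * (1 + Q) = 1 + Q by rw [mul_add, mul_one, hQQ, add_comm]]
  have hAa0 : A *ᵥ a0 = a0 := by
    rw [ha0, mulVec_mulVec, ← mul_assoc, commQA, mul_assoc,
      show A * (1 + A) = 1 + A by rw [mul_add, mul_one, sA, add_comm]]
  -- b-vector: Q b = -b, A b = -b
  have hMm_tr : ((1 - Q) * (1 - A)).trace = 16 := by
    have : (1 - Q) * (1 - A) = 1 - A - Q + Q * A := by noncomm_ring
    rw [this, trace_add, trace_sub, trace_sub, htrA, htrQA, htrace, trace_one]
    norm_num
  have hMm_ne : (1 - Q) * (1 - A) ≠ 0 := by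
    intro h
    rw [h, trace_zero] at hMm_tr
    norm_num at hMm_tr
  obtain ⟨v, hv⟩ := matrix_ne_zero_exists_mulVec _ hMm_ne
  set b0 : Fin 16 → ℝ := ((1 - Q) * (1 - A)) *ᵥ v with hb0
  have hQb0 : Q *ᵥ b0 = -b0 := by
    rw [hb0, mulVec_mulVec, ← mul_assoc,
      show Q * (1 - Q) = -((1 - Q)) by rw [mul_sub, mul_one, hQQ, neg_sub],
      neg_mul, neg_mulVec]
  have hAb0 : A *ᵥ b0 = -b0 := by
    rw [hb0, mulVec_mulVec, ← mul_assoc, commQA', mul_assoc,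
      show A * (1 - A) = -(1 - A) by rw [mul_sub, mul_one, sA, neg_sub],
      mul_neg, neg_mulVec]
  -- normalize
  have ha0pos : 0 < a0 ⬝ᵥ a0 := dot_self_pos _ hu
  have hb0pos : 0 < b0 ⬝ᵥ b0 := dot_self_pos _ hv
  set α : ℝ := Real.sqrt (a0 ⬝ᵥ a0) with hα
  set β : ℝ := Real.sqrt (b0 ⬝ᵥ b0) with hβ
  have hαpos : 0 < α := Real.sqrt_pos.mpr ha0pos
  have hβpos : 0 < β := Real.sqrt_pos.mpr hb0pos
  set a : Fin 16 → ℝ := α⁻¹ • a0 with ha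
  set b : Fin 16 → ℝ := β⁻¹ • b0 with hb'
  have haa : a ⬝ᵥ a = 1 := by
    rw [ha, smul_dotProduct, dotProduct_smul, smul_eq_mul, smul_eq_mul,
      ← mul_assoc, ← mul_inv]
    rw [hα, Real.mul_self_sqrt ha0pos.le]
    field_simp
  have hbb : b ⬝ᵥ b = 1 := by
    rw [hb', smul_dotProduct, dotProduct_smul, smul_eq_mul, smul_eq_mul,
      ← mul_assoc, ← mul_inv]
    rw [hβ, Real.mul_self_sqrt hb0pos.le]
    field_simp
  have hQa : Q *ᵥ a = a := by rw [ha, mulVec_smul, hQa0]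
  have hAa : A *ᵥ a = a := by rw [ha, mulVec_smul, hAa0]
  have hQb : Q *ᵥ b = -b := by rw [hb', mulVec_smul, hQb0, smul_neg]
  have hAb : A *ᵥ b = -b := by rw [hb', mulVec_smul, hAb0, smul_neg]
  -- orthogonality and quadratic form values
  have hab : a ⬝ᵥ b = 0 := by
    have h1 : a ⬝ᵥ b = -(a ⬝ᵥ b) := by
      conv_lhs => rw [← hQa, symdot Q tQ, hQb, dotProduct_neg]
    linarith
  have hba : b ⬝ᵥ a = 0 := by rw [dotProduct_comm, hab]
  -- ⟨P_i a, a⟩ = 0 for i ≠ 0 (anticommuting with A)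
  have keyA : ∀ (M : Matrix (Fin 16) (Fin 16) ℝ), Mᵀ = M → A * (M * A) = -M →
      ∀ y : Fin 16 → ℝ, A *ᵥ y = y ∨ A *ᵥ y = -y → (M *ᵥ y) ⬝ᵥ y = 0 := by
    intro M hMt hMA y hy
    have key : (M *ᵥ (A *ᵥ y)) ⬝ᵥ (A *ᵥ y) = -((M *ᵥ y) ⬝ᵥ y) := by
      rw [mulVec_mulVec, ← symdot A tA, mulVec_mulVec, hMA, neg_mulVec, neg_dotProduct]
    rcases hy with h | h
    · rw [h] at key; linarith
    · rw [h, mulVec_neg, neg_dotProduct, dotProduct_neg, neg_neg] at key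
      linarith
  -- cross terms vanish
  have keyQ : ∀ (M : Matrix (Fin 16) (Fin 16) ℝ), Q * M = M * Q →
      (M *ᵥ a) ⬝ᵥ b = 0 := by
    intro M hMQ
    have h1 : (M *ᵥ a) ⬝ᵥ b = -((M *ᵥ a) ⬝ᵥ b) := by
      conv_lhs => rw [show a = Q *ᵥ a from hQa.symm, mulVec_mulVec, ← hMQ, ← mulVec_mulVec,
        symdot Q tQ, hQb, dotProduct_neg]
    linarith
  have keyQ' : ∀ (M : Matrix (Fin 16) (Fin 16) ℝ), Mᵀ = M → Q * M = M * Q →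
      (M *ᵥ b) ⬝ᵥ a = 0 := by
    intro M hMt hMQ
    rw [symdot M hMt, dotProduct_comm, keyQ M hMQ]
  -- anticommutation sandwich facts
  have sandB : A * (B * A) = -B := by rw [aBA, mul_neg, sA']
  have sandC : A * (C * A) = -C := by rw [aCA, mul_neg, sA']
  have sandD : A * (D * A) = -D := by rw [aDA, mul_neg, sA']
  have sandE : A * (E * A) = -E := by rw [aEA, mul_neg, sA']
  -- quadratic form values on a and b
  have dAa : (A *ᵥ a) ⬝ᵥ a = 1 := by rw [hAa, haa]
  have dAb : (A *ᵥ b) ⬝ᵥ b = -1 := by rw [hAb, neg_dotProduct, hbb]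
  have dBa := keyA B tB sandB a (Or.inl hAa)
  have dBb := keyA B tB sandB b (Or.inr hAb)
  have dCa := keyA C tC sandC a (Or.inl hAa)
  have dCb := keyA C tC sandC b (Or.inr hAb)
  have dDa := keyA D tD sandD a (Or.inl hAa)
  have dDb := keyA D tD sandD b (Or.inr hAb)
  have dEa := keyA E tE sandE a (Or.inl hAa)
  have dEb := keyA E tE sandE b (Or.inr hAb)
  -- cross terms
  have cAab := keyQ A hQA
  have cBab := keyQ B hQB
  have cCab := keyQ C hQC
  have cDab := keyQ D hQD
  have cEab := keyQ E hQE
  have cAba := keyQ' A tA hQA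
  have cBba := keyQ' B tB hQB
  have cCba := keyQ' C tC hQC
  have cDba := keyQ' D tD hQD
  have cEba := keyQ' E tE hQE
  -- the point x
  set s2 : ℝ := Real.sqrt 2 with hs2def
  have hs2 : s2 * s2 = 2 := Real.mul_self_sqrt (by norm_num)
  have hs2pos : 0 < s2 := Real.sqrt_pos.mpr (by norm_num)
  set x : Fin 16 → ℝ := s2⁻¹ • (a + b) with hx
  have mainx : x ⬝ᵥ x = 1 := by
    rw [hx]
    simp only [smul_dotProduct, dotProduct_smul, dotProduct_add, add_dotProduct,
      smul_eq_mul, haa, hbb, hab, hba]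
    field_simp
    linarith [hs2]
  have keyX : ∀ (M : Matrix (Fin 16) (Fin 16) ℝ),
      (M *ᵥ a) ⬝ᵥ a + (M *ᵥ b) ⬝ᵥ b = 0 → (M *ᵥ a) ⬝ᵥ b = 0 → (M *ᵥ b) ⬝ᵥ a = 0 →
      (M *ᵥ x) ⬝ᵥ x = 0 := by
    intro M h1 h2 h3
    rw [hx]
    simp only [mulVec_smul, mulVec_add, smul_dotProduct, dotProduct_smul,
      dotProduct_add, add_dotProduct, smul_eq_mul]
    linear_combination (s2⁻¹ * s2⁻¹) * h1 + (s2⁻¹ * s2⁻¹) * h2 + (s2⁻¹ * s2⁻¹) * h3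
  have forms : ∀ i, (P i) *ᵥ x ⬝ᵥ x = 0 := by
    intro i
    fin_cases i
    · exact keyX A (by rw [dAa, dAb]; norm_num) cAab cAba
    · exact keyX B (by rw [dBa, dBb]; norm_num) cBab cBba
    · exact keyX C (by rw [dCa, dCb]; norm_num) cCab cCba
    · exact keyX D (by rw [dDa, dDb]; norm_num) cDab cDba
    · exact keyX E (by rw [dEa, dEb]; norm_num) cEab cEba
  have hQx : Q *ᵥ x = s2⁻¹ • (a + -b) := by
    rw [hx, mulVec_smul, mulVec_add, hQa, hQb]
  refine ⟨x, mainx, forms, ?_, ?_⟩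
  · intro h
    rw [hQx, hx] at h
    have hdb := congrArg (fun w => w ⬝ᵥ b) h
    simp only [smul_dotProduct, add_dotProduct, neg_dotProduct, smul_eq_mul,
      hab, hbb] at hdb
    have hpos : 0 < s2⁻¹ := inv_pos.mpr hs2pos
    linarith [hdb]
  · intro h
    rw [hQx, hx] at h
    have hda := congrArg (fun w => w ⬝ᵥ a) h
    simp only [smul_dotProduct, add_dotProduct, neg_dotProduct, smul_eq_mul,
      haa, hba, Pi.neg_apply] at hda
    have hpos : 0 < s2⁻¹ := inv_pos.mpr hs2pos
    linarith [hda]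
end

section
/- Let P_0, …, P_9 be a symmetric Clifford system on ℝ^{32}. Then the operators T_{ij} = P_{2i}P_{2i+1}P_{2j}P_{2j+1}, 0 ≤ i < j ≤ 4, are symmetric, satisfy T_{ij}² = Id, and pairwise commute; consequently there exists a unit vector x ∈ ℝ^{32} which is a common eigenvector of all the T_{ij} (with eigenvalues ±1), and every such common eigenvector x satisfies ⟨P_k x, x⟩ = 0 for all k = 0, …, 9, i.e. x lies on the focal submanifold M_+. -/
/-!
Write `A_i = P_{2i} P_{2i+1}`. The Clifford relations make each `A_i` skew-symmetric with
`A_i² = -1`, and any two `A_i` commute, so the `T_{ij} = A_i A_j` are commuting symmetric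
involutions and have a common `±1`-eigenvector. Each `P_k` anticommutes with `A_{⌊k/2⌋}` and
commutes with every other `A_i`, hence anticommutes with `T_{ij}` whenever exactly one of `i, j`
is `⌊k/2⌋`. For such a `T_{ij}` and `T_{ij} x = ε x`, symmetry of `T_{ij}` gives
`ε ⟨P_k x, x⟩ = ⟨P_k x, T_{ij} x⟩ = ⟨T_{ij} P_k x, x⟩ = -ε ⟨P_k x, x⟩`, so `⟨P_k x, x⟩ = 0`.
-/

open Matrix

def Anticommute {R : Type*} [Mul R] [Neg R] (a b : R) : Prop := a * b = -(b * a)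

section Anticommute

variable {R : Type*} [Ring R] {a b c : R}

theorem Anticommute.symm (h : Anticommute a b) : Anticommute b a := by
  rw [Anticommute, h, neg_neg]

theorem Anticommute.commute_mul (hb : Anticommute a b) (hc : Anticommute a c) :
    Commute a (b * c) := by
  rw [Commute, SemiconjBy, ← mul_assoc, hb, neg_mul, mul_assoc, hc, mul_neg, neg_neg, mul_assoc]

theorem Anticommute.mul_commute (hb : Anticommute a b) (hc : Commute a c) :
    Anticommute a (b * c) := by
  rw [Anticommute, ← mul_assoc, hb, neg_mul, mul_assoc, hc.eq, ← mul_assoc]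

theorem Commute.mul_anticommute (hb : Commute a b) (hc : Anticommute a c) :
    Anticommute a (b * c) := by
  rw [Anticommute, ← mul_assoc, hb.eq, mul_assoc, hc, mul_neg, ← mul_assoc]

theorem Anticommute.left_mul (h : Anticommute a b) (ha : a * a = 1) :
    Anticommute a (a * b) := by
  rw [Anticommute, ← mul_assoc, ha, one_mul, mul_assoc, h.symm, mul_neg, ← mul_assoc, ha, one_mul,
    neg_neg]

theorem Anticommute.right_mul (h : Anticommute a b) (hb : b * b = 1) :
    Anticommute b (a * b) := by
  rw [Anticommute, ← mul_assoc, h.symm, neg_mul, mul_assoc, hb, mul_one]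

theorem Anticommute.mul_mul_self (h : Anticommute a b) (ha : a * a = 1) (hb : b * b = 1) :
    a * b * (a * b) = -1 := by
  rw [mul_assoc, ← mul_assoc b, h.symm, neg_mul, mul_neg, ← mul_assoc, ← mul_assoc, ha, one_mul,
    hb]

end Anticommute

theorem Commute.mul_mul_self_eq_one {R : Type*} [Ring R] {a b : R} (h : Commute a b)
    (ha : a * a = -1) (hb : b * b = -1) : a * b * (a * b) = 1 := by
  rw [h.symm.mul_mul_mul_comm, ha, hb, neg_mul_neg, one_mul]

section CliffordSystem

variable {R ι : Type*} [Ring R] [DecidableEq ι] {P : ι → R}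
  (h : ∀ i j, P i * P j + P j * P i = if i = j then 2 else 0)
include h

theorem mul_self_eq_one_of_clifford_s13 [IsAddTorsionFree R] (i : ι) : P i * P i = 1 :=
  nsmul_right_injective two_ne_zero <| by
    simpa only [two_nsmul, one_add_one_eq_two, if_pos] using h i i

theorem anticommute_of_clifford {i j : ι} (hij : i ≠ j) : Anticommute (P i) (P j) :=
  eq_neg_of_add_eq_zero_left (by simpa [hij] using h i j)

end CliffordSystem

section PairProduct

variable {R : Type*} [Ring R] {m : ℕ} {P : Fin (2 * m) → R}

def pairProduct (P : Fin (2 * m) → R) (i : Fin m) : R :=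
  P ⟨2 * i, by omega⟩ * P ⟨2 * i + 1, by omega⟩

variable (hanti : ∀ i j, i ≠ j → Anticommute (P i) (P j))
include hanti

theorem pairProduct_mul_self (hsq : ∀ i, P i * P i = 1) (i : Fin m) :
    pairProduct P i * pairProduct P i = -1 :=
  (hanti _ _ (Fin.ne_of_val_ne (by dsimp only; omega))).mul_mul_self (hsq _) (hsq _)

theorem commute_pairProduct_of_ne {k : Fin (2 * m)} {i : Fin m} (hk : k.val / 2 ≠ i.val) :
    Commute (P k) (pairProduct P i) :=
  (hanti _ _ (Fin.ne_of_val_ne (by dsimp only; omega))).commute_mul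
    (hanti _ _ (Fin.ne_of_val_ne (by dsimp only; omega)))

theorem anticommute_pairProduct (hsq : ∀ i, P i * P i = 1) {k : Fin (2 * m)} {i : Fin m}
    (hk : k.val / 2 = i.val) : Anticommute (P k) (pairProduct P i) := by
  have hpair : Anticommute (P ⟨2 * i, by omega⟩) (P ⟨2 * i + 1, by omega⟩) :=
    hanti _ _ (Fin.ne_of_val_ne (by dsimp only; omega))
  rcases (by omega : k.val = 2 * i ∨ k.val = 2 * i + 1) with h | h
  · rw [congrArg P (Fin.ext h : k = ⟨2 * i, by omega⟩)]
    exact hpair.left_mul (hsq _)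
  · rw [congrArg P (Fin.ext h : k = ⟨2 * i + 1, by omega⟩)]
    exact hpair.right_mul (hsq _)

theorem commute_pairProduct (i j : Fin m) : Commute (pairProduct P i) (pairProduct P j) := by
  rcases eq_or_ne i j with rfl | hij
  · exact Commute.refl _
  · exact (commute_pairProduct_of_ne hanti (by dsimp only; omega)).mul_left
      (commute_pairProduct_of_ne hanti (by dsimp only; omega))

theorem anticommute_pairProduct_mul (hsq : ∀ i, P i * P i = 1) {k : Fin (2 * m)} {i j : Fin m}
    (hij : i ≠ j) (hk : k.val / 2 = i.val ∨ k.val / 2 = j.val) :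
    Anticommute (P k) (pairProduct P i * pairProduct P j) := by
  rcases hk with hk | hk
  · exact (anticommute_pairProduct hanti hsq hk).mul_commute
      (commute_pairProduct_of_ne hanti (by omega))
  · exact (commute_pairProduct_of_ne hanti (by omega)).mul_anticommute
      (anticommute_pairProduct hanti hsq hk)

end PairProduct

theorem transpose_pairProduct {n α : Type*} [Fintype n] [DecidableEq n] [CommRing α] {m : ℕ}
    {P : Fin (2 * m) → Matrix n n α} (hsymm : ∀ i, (P i).IsSymm)
    (hanti : ∀ i j, i ≠ j → Anticommute (P i) (P j)) (i : Fin m) :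
    (pairProduct P i)ᵀ = -pairProduct P i := by
  rw [pairProduct, transpose_mul, (hsymm _).eq, (hsymm _).eq]
  exact hanti _ _ (Fin.ne_of_val_ne (by dsimp only; omega))

theorem Matrix.isSymm_mul_of_transpose_eq_neg {n α : Type*} [Fintype n] [CommRing α]
    {A B : Matrix n n α} (hA : Aᵀ = -A) (hB : Bᵀ = -B) (h : Commute A B) : (A * B).IsSymm := by
  rw [IsSymm, transpose_mul, hA, hB, neg_mul_neg, h.eq]

section CommonEigenvector

variable {n R : Type*} [Fintype n] [CommRing R]

theorem Commute.mulVec_eq_smul {A B : Matrix n n R} (h : Commute A B) {w : n → R} {ε : R}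
    (hw : A *ᵥ w = ε • w) : A *ᵥ (B *ᵥ w) = ε • (B *ᵥ w) := by
  rw [mulVec_mulVec, h.eq, ← mulVec_mulVec, hw, mulVec_smul]

theorem Matrix.exists_common_eigenvector_of_mul_self_eq_one [DecidableEq n]
    (s : Finset (Matrix n n R)) (hsq : ∀ A ∈ s, A * A = 1)
    (hcomm : ∀ A ∈ s, ∀ B ∈ s, Commute A B) {v : n → R} (hv : v ≠ 0) :
    ∃ w ≠ 0, ∀ A ∈ s, ∃ ε : R, (ε = 1 ∨ ε = -1) ∧ A *ᵥ w = ε • w := by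
  classical
  induction s using Finset.induction_on with
  | empty => exact ⟨v, hv, by simp⟩
  | insert T s _ ih =>
    obtain ⟨w, hw, hws⟩ := ih (fun A hA => hsq A (by simp [hA]))
      (fun A hA B hB => hcomm A (by simp [hA]) B (by simp [hB]))
    have hTs : ∀ A ∈ s, Commute A T := fun A hA => hcomm A (by simp [hA]) T (by simp)
    -- `T w + w` is fixed by the involution `T`; if it vanishes, `w` has eigenvalue `-1`.
    by_cases hz : T *ᵥ w + w = 0
    · refine ⟨w, hw, (Finset.forall_mem_insert _ _ _).2 ⟨⟨-1, Or.inr rfl, ?_⟩, hws⟩⟩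
      rw [eq_neg_of_add_eq_zero_left hz, neg_one_smul]
    · refine ⟨T *ᵥ w + w, hz, (Finset.forall_mem_insert _ _ _).2 ⟨⟨1, Or.inl rfl, ?_⟩, ?_⟩⟩
      · rw [one_smul, mulVec_add, mulVec_mulVec, hsq T (by simp), one_mulVec, add_comm]
      · intro A hA
        obtain ⟨ε, hε, hAw⟩ := hws A hA
        exact ⟨ε, hε, by rw [mulVec_add, (hTs A hA).mulVec_eq_smul hAw, hAw, smul_add]⟩

end CommonEigenvector

theorem Matrix.exists_smul_dotProduct_smul_self_eq_one {n : Type*} [Fintype n] {w : n → ℝ}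
    (hw : w ≠ 0) : ∃ c : ℝ, c • w ⬝ᵥ c • w = 1 := by
  have hpos : 0 < w ⬝ᵥ w :=
    (Finset.sum_nonneg fun i _ => mul_self_nonneg (w i)).lt_of_ne'
      (dotProduct_self_eq_zero.not.2 hw)
  refine ⟨(Real.sqrt (w ⬝ᵥ w))⁻¹, ?_⟩
  rw [smul_dotProduct, dotProduct_smul, smul_eq_mul, smul_eq_mul, ← mul_assoc, ← mul_inv,
    Real.mul_self_sqrt hpos.le, inv_mul_cancel₀ hpos.ne']

theorem Matrix.dotProduct_mulVec_self_eq_zero_of_anticommute {n K : Type*} [Fintype n]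
    [CommRing K] [IsDomain K] [IsAddTorsionFree K] {S T : Matrix n n K} (hT : T.IsSymm)
    (h : Anticommute S T) {x : n → K} {ε : K} (hε : ε ≠ 0) (hx : T *ᵥ x = ε • x) :
    S *ᵥ x ⬝ᵥ x = 0 := by
  have key : ε * (S *ᵥ x ⬝ᵥ x) = -(ε * (S *ᵥ x ⬝ᵥ x)) :=
    calc ε * (S *ᵥ x ⬝ᵥ x) = S *ᵥ x ⬝ᵥ T *ᵥ x := by
          rw [hx, dotProduct_smul, smul_eq_mul]
      _ = (T * S) *ᵥ x ⬝ᵥ x := by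
          rw [dotProduct_mulVec, ← mulVec_transpose, hT.eq, mulVec_mulVec]
      _ = -(ε * (S *ᵥ x ⬝ᵥ x)) := by
          rw [← neg_neg (T * S), ← h, neg_mulVec, ← mulVec_mulVec, hx, mulVec_smul,
            neg_dotProduct, smul_dotProduct, smul_eq_mul]
  exact (mul_eq_zero.1 (self_eq_neg.1 key)).resolve_left hε

/-- For a symmetric Clifford system `P_0, …, P_9` on `ℝ^{32}`, the
operators `T_{ij} = P_{2i} P_{2i+1} P_{2j} P_{2j+1}` (`0 ≤ i < j ≤ 4`) are
symmetric involutions which pairwise commute; consequently there is a common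
unit eigenvector `x` (with eigenvalues `±1`) of all the `T_{ij}`, and every
such common eigenvector satisfies `⟨P_k x, x⟩ = 0` for all `k`, i.e. lies on
the focal submanifold `M₊`. -/
theorem fkm_96_common_eigenvector_lies_on_Mplus
    (P : Fin 10 → Matrix (Fin 32) (Fin 32) ℝ)
    (hsymm : ∀ i, (P i).IsSymm)
    (hcliff : ∀ i j, P i * P j + P j * P i =
      if i = j then (2 : Matrix (Fin 32) (Fin 32) ℝ) else 0)
    (T : Fin 5 → Fin 5 → Matrix (Fin 32) (Fin 32) ℝ)
    (hT : ∀ i j : Fin 5, T i j =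
      P ⟨2 * i.val, by have := i.isLt; omega⟩ *
      P ⟨2 * i.val + 1, by have := i.isLt; omega⟩ *
      P ⟨2 * j.val, by have := j.isLt; omega⟩ *
      P ⟨2 * j.val + 1, by have := j.isLt; omega⟩) :
    (∀ i j : Fin 5, i < j → (T i j).IsSymm ∧ T i j * T i j = 1) ∧
    (∀ i j k n : Fin 5, i < j → k < n → T i j * T k n = T k n * T i j) ∧
    (∃ x : Fin 32 → ℝ, x ⬝ᵥ x = 1 ∧
      ∀ i j : Fin 5, i < j → ∃ ε : ℝ, (ε = 1 ∨ ε = -1) ∧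
        (T i j).mulVec x = ε • x) ∧
    (∀ x : Fin 32 → ℝ, x ⬝ᵥ x = 1 →
      (∀ i j : Fin 5, i < j → ∃ ε : ℝ, (ε = 1 ∨ ε = -1) ∧
        (T i j).mulVec x = ε • x) →
      ∀ k, (P k).mulVec x ⬝ᵥ x = 0) := by
  have : IsAddTorsionFree (Matrix (Fin 32) (Fin 32) ℝ) := .of_module_rat _
  have hsq := mul_self_eq_one_of_clifford_s13 hcliff
  have hanti (i j) : i ≠ j → Anticommute (P i) (P j) := anticommute_of_clifford hcliff
  have hTA (i j : Fin 5) : T i j = pairProduct (m := 5) P i * pairProduct P j :=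
    (hT i j).trans (mul_assoc _ _ _)
  have hTsymm (i j : Fin 5) : (T i j).IsSymm := hTA i j ▸ isSymm_mul_of_transpose_eq_neg
    (transpose_pairProduct hsymm hanti i) (transpose_pairProduct hsymm hanti j)
    (commute_pairProduct hanti i j)
  have hTsq (i j : Fin 5) : T i j * T i j = 1 :=
    hTA i j ▸ (commute_pairProduct hanti i j).mul_mul_self_eq_one
      (pairProduct_mul_self hanti hsq i) (pairProduct_mul_self hanti hsq j)
  have hTcomm (i j k n : Fin 5) : Commute (T i j) (T k n) := by
    have hA := commute_pairProduct hanti (P := P) (m := 5)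
    rw [hTA, hTA]
    exact ((hA i k).mul_right (hA i n)).mul_left ((hA j k).mul_right (hA j n))
  refine ⟨fun i j _ => ⟨hTsymm i j, hTsq i j⟩, fun i j k n _ _ => (hTcomm i j k n).eq, ?_, ?_⟩
  · obtain ⟨v, hv⟩ := exists_ne (0 : Fin 32 → ℝ)
    obtain ⟨w, hw, hTw⟩ := exists_common_eigenvector_of_mul_self_eq_one
      (Finset.univ.image (Function.uncurry T)) (Finset.forall_mem_image.2 fun p _ => hTsq p.1 p.2)
      (Finset.forall_mem_image.2 fun p _ =>
        Finset.forall_mem_image.2 fun q _ => hTcomm p.1 p.2 q.1 q.2) hv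
    obtain ⟨c, hc⟩ := exists_smul_dotProduct_smul_self_eq_one hw
    refine ⟨c • w, hc, fun i j _ => ?_⟩
    obtain ⟨ε, hε, h⟩ := hTw (T i j) (Finset.mem_image_of_mem _ (Finset.mem_univ (i, j)))
    exact ⟨ε, hε, by rw [mulVec_smul, h, smul_comm]⟩
  · intro x _ hx k
    obtain ⟨i, j, hij, hk⟩ : ∃ i j : Fin 5, i < j ∧ (k.val / 2 = i.val ∨ k.val / 2 = j.val) := by
      revert k; decide
    obtain ⟨ε, hε, hTx⟩ := hx i j hij
    exact dotProduct_mulVec_self_eq_zero_of_anticommute (hTsymm i j)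
      (hTA i j ▸ anticommute_pairProduct_mul hanti hsq hij.ne hk)
      (by rcases hε with rfl | rfl <;> norm_num) hTx
end

section
/- Let u_1, …, u_{21} be unit vectors in the Euclidean space ℝ^{21}. Then the function ρ(X) = 5⟨X, u_1⟩² + 2 ∑_{i=2}^{21} ⟨X, u_i⟩² is not constant on the unit sphere of ℝ^{21}; that is, there exist unit vectors X, Y ∈ ℝ^{21} with ρ(X) ≠ ρ(Y). -/
open Matrix Finset

/-- For unit vectors `u_1, …, u_{21}` in `ℝ^{21}`, the function
`ρ(X) = 5 ⟨X, u_1⟩² + 2 ∑_{i=2}^{21} ⟨X, u_i⟩²` is not constant on the unit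
sphere of `ℝ^{21}`. -/
theorem weighted_sum_of_squares_not_constant_on_sphere
    (u : Fin 21 → (Fin 21 → ℝ)) (hu : ∀ i, u i ⬝ᵥ u i = 1) :
    ∃ X Y : Fin 21 → ℝ, X ⬝ᵥ X = 1 ∧ Y ⬝ᵥ Y = 1 ∧
      5 * (X ⬝ᵥ u 0) ^ 2 + 2 * ∑ i ∈ univ.erase (0 : Fin 21), (X ⬝ᵥ u i) ^ 2 ≠
      5 * (Y ⬝ᵥ u 0) ^ 2 + 2 * ∑ i ∈ univ.erase (0 : Fin 21), (Y ⬝ᵥ u i) ^ 2 := by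
  by_contra h
  push_neg at h
  set ρ : (Fin 21 → ℝ) → ℝ := fun X =>
    5 * (X ⬝ᵥ u 0) ^ 2 + 2 * ∑ i ∈ univ.erase (0 : Fin 21), (X ⬝ᵥ u i) ^ 2 with hρ
  have h' : ∀ X Y : Fin 21 → ℝ, X ⬝ᵥ X = 1 → Y ⬝ᵥ Y = 1 → ρ X = ρ Y := by
    intro X Y hX hY
    exact h X Y hX hY
  have hdot : ∀ (j : Fin 21) (v : Fin 21 → ℝ), (Pi.single j (1:ℝ)) ⬝ᵥ v = v j := by
    intro j v
    simp [dotProduct, Pi.single_apply, ite_mul]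
  have hse : ∀ j : Fin 21, (Pi.single j (1:ℝ)) ⬝ᵥ (Pi.single j (1:ℝ)) = 1 := by
    intro j
    rw [hdot]; simp
  have hsum : ∀ i : Fin 21, ∑ j : Fin 21, (u i j) ^ 2 = 1 := by
    intro i
    have := hu i
    simpa [dotProduct, pow_two] using this
  have heq : ∀ j : Fin 21, ρ (Pi.single j (1:ℝ)) = ρ (u 0) :=
    fun j => h' _ _ (hse j) (hu 0)
  have htr : ∑ j : Fin 21, ρ (Pi.single j (1:ℝ)) = 45 := by
    simp only [hρ, hdot]
    rw [Finset.sum_add_distrib, ← Finset.mul_sum, ← Finset.mul_sum, hsum 0]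
    rw [Finset.sum_comm]
    have : ∑ i ∈ univ.erase (0 : Fin 21), ∑ j : Fin 21, (u i j) ^ 2 = 20 := by
      rw [Finset.sum_congr rfl (fun i _ => hsum i)]
      simp
    rw [this]
    norm_num
  have htr' : (21 : ℝ) * ρ (u 0) = 45 := by
    rw [← htr, Finset.sum_congr rfl (fun j _ => heq j)]
    simp
  have hge : (5 : ℝ) ≤ ρ (u 0) := by
    have h1 : (u 0 ⬝ᵥ u 0) ^ 2 = 1 := by rw [hu 0]; norm_num
    have h2 : (0:ℝ) ≤ ∑ i ∈ univ.erase (0 : Fin 21), (u 0 ⬝ᵥ u i) ^ 2 :=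
      Finset.sum_nonneg fun i _ => sq_nonneg _
    simp only [hρ, h1]
    nlinarith
  nlinarith
end

section
/- Let P_0, …, P_{10} be a symmetric Clifford system on ℝ^{64} and let x ∈ ℝ^{64} be a unit vector which is a common eigenvector (with eigenvalues ±1) of the five commuting operators P_0P_1P_2P_3, P_4P_5P_6P_7, P_0P_1P_8P_9, P_2P_3P_8P_9, and P_0P_2P_8P_{10}. Then the dimension of the linear span of the 55 vectors {P_i P_j x : 0 ≤ i < j ≤ 10} is strictly less than 52. -/
open Matrix

variable {P : Fin 11 → Matrix (Fin 64) (Fin 64) ℝ}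

lemma aux_sq (hcliff : ∀ i j, P i * P j + P j * P i =
      if i = j then (2 : Matrix (Fin 64) (Fin 64) ℝ) else 0) (i : Fin 11) :
    P i * P i = 1 := by
  have h := hcliff i i
  simp only [if_pos rfl] at h
  have h2 : (2:ℝ) • (P i * P i) = (2:ℝ) • (1 : Matrix (Fin 64) (Fin 64) ℝ) := by
    rw [two_smul, two_smul, h]
    exact one_add_one_eq_two.symm
  exact smul_right_injective _ (two_ne_zero) h2

lemma aux_sq' (hcliff : ∀ i j, P i * P j + P j * P i =
      if i = j then (2 : Matrix (Fin 64) (Fin 64) ℝ) else 0) (i : Fin 11)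
    (X : Matrix (Fin 64) (Fin 64) ℝ) : P i * (P i * X) = X := by
  rw [← mul_assoc, aux_sq hcliff, one_mul]

lemma aux_swap (hcliff : ∀ i j, P i * P j + P j * P i =
      if i = j then (2 : Matrix (Fin 64) (Fin 64) ℝ) else 0) {i j : Fin 11} (h : i ≠ j) :
    P j * P i = -(P i * P j) := by
  have h' := hcliff i j
  rw [if_neg h] at h'
  rw [add_comm] at h'; exact eq_neg_of_add_eq_zero_left h'

lemma aux_swap' (hcliff : ∀ i j, P i * P j + P j * P i =
      if i = j then (2 : Matrix (Fin 64) (Fin 64) ℝ) else 0) {i j : Fin 11} (h : i ≠ j)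
    (X : Matrix (Fin 64) (Fin 64) ℝ) : P j * (P i * X) = -(P i * (P j * X)) := by
  rw [← mul_assoc, aux_swap hcliff h, neg_mul, mul_assoc]

/-- For a symmetric Clifford system `P_0, …, P_{10}` on `ℝ^{64}`
and a unit vector `x` which is a common eigenvector (with eigenvalues `±1`) of
the five commuting operators `P_0P_1P_2P_3`, `P_4P_5P_6P_7`, `P_0P_1P_8P_9`,
`P_2P_3P_8P_9`, `P_0P_2P_8P_{10}`, the span of the 55 vectors `P_i P_j x`
(`0 ≤ i < j ≤ 10`) has dimension strictly less than 52. -/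
theorem fkm_1021_span_dim_lt_52
    (P : Fin 11 → Matrix (Fin 64) (Fin 64) ℝ)
    (hsymm : ∀ i, (P i).IsSymm)
    (hcliff : ∀ i j, P i * P j + P j * P i =
      if i = j then (2 : Matrix (Fin 64) (Fin 64) ℝ) else 0)
    (x : Fin 64 → ℝ) (hx : x ⬝ᵥ x = 1)
    (h1 : ∃ ε : ℝ, (ε = 1 ∨ ε = -1) ∧ (P 0 * P 1 * P 2 * P 3).mulVec x = ε • x)
    (h2 : ∃ ε : ℝ, (ε = 1 ∨ ε = -1) ∧ (P 4 * P 5 * P 6 * P 7).mulVec x = ε • x)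
    (h3 : ∃ ε : ℝ, (ε = 1 ∨ ε = -1) ∧ (P 0 * P 1 * P 8 * P 9).mulVec x = ε • x)
    (h4 : ∃ ε : ℝ, (ε = 1 ∨ ε = -1) ∧ (P 2 * P 3 * P 8 * P 9).mulVec x = ε • x)
    (h5 : ∃ ε : ℝ, (ε = 1 ∨ ε = -1) ∧ (P 0 * P 2 * P 8 * P 10).mulVec x = ε • x) :
    Module.finrank ℝ ↥(Submodule.span ℝ
      {v : Fin 64 → ℝ | ∃ i j : Fin 11, i < j ∧ v = (P i * P j).mulVec x}) < 52 := by
  classical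
  obtain ⟨ε1, hε1, hQ1⟩ := h1
  obtain ⟨ε2, hε2, hQ2⟩ := h2
  have hε1ne : ε1 ≠ 0 := by rcases hε1 with h | h <;> simp [h]
  have hε2ne : ε2 ≠ 0 := by rcases hε2 with h | h <;> simp [h]
  -- key matrix identities
  have k12 : (P 1 * P 2) * (P 0 * P 1 * P 2 * P 3) = -(P 0 * P 3) := by
    have s10 := aux_swap' hcliff (show (0:Fin 11) ≠ 1 by decide)
    have s20 := aux_swap' hcliff (show (0:Fin 11) ≠ 2 by decide)
    have s21 := aux_swap' hcliff (show (1:Fin 11) ≠ 2 by decide)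
    have s30 := aux_swap' hcliff (show (0:Fin 11) ≠ 3 by decide)
    have s31 := aux_swap' hcliff (show (1:Fin 11) ≠ 3 by decide)
    have s32 := aux_swap' hcliff (show (2:Fin 11) ≠ 3 by decide)
    have q := aux_sq' hcliff
    have t10 := aux_swap hcliff (show (0:Fin 11) ≠ 1 by decide)
    have t21 := aux_swap hcliff (show (1:Fin 11) ≠ 2 by decide)
    have t31 := aux_swap hcliff (show (1:Fin 11) ≠ 3 by decide)
    have t32 := aux_swap hcliff (show (2:Fin 11) ≠ 3 by decide)
    have u := aux_sq hcliff
    simp only [mul_assoc, mul_neg, neg_mul, neg_neg, mul_one, s10, s20, s21, s30, s31, s32,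
      q, t10, t21, t31, t32, u]
  have k13 : (P 1 * P 3) * (P 0 * P 1 * P 2 * P 3) = (P 0 * P 2) := by
    have s10 := aux_swap' hcliff (show (0:Fin 11) ≠ 1 by decide)
    have s20 := aux_swap' hcliff (show (0:Fin 11) ≠ 2 by decide)
    have s21 := aux_swap' hcliff (show (1:Fin 11) ≠ 2 by decide)
    have s30 := aux_swap' hcliff (show (0:Fin 11) ≠ 3 by decide)
    have s31 := aux_swap' hcliff (show (1:Fin 11) ≠ 3 by decide)
    have s32 := aux_swap' hcliff (show (2:Fin 11) ≠ 3 by decide)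
    have q := aux_sq' hcliff
    have t10 := aux_swap hcliff (show (0:Fin 11) ≠ 1 by decide)
    have t21 := aux_swap hcliff (show (1:Fin 11) ≠ 2 by decide)
    have t31 := aux_swap hcliff (show (1:Fin 11) ≠ 3 by decide)
    have t32 := aux_swap hcliff (show (2:Fin 11) ≠ 3 by decide)
    have u := aux_sq hcliff
    simp only [mul_assoc, mul_neg, neg_mul, neg_neg, mul_one, s10, s20, s21, s30, s31, s32,
      q, t10, t21, t31, t32, u]
  have k23 : (P 2 * P 3) * (P 0 * P 1 * P 2 * P 3) = -(P 0 * P 1) := by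
    have s10 := aux_swap' hcliff (show (0:Fin 11) ≠ 1 by decide)
    have s20 := aux_swap' hcliff (show (0:Fin 11) ≠ 2 by decide)
    have s21 := aux_swap' hcliff (show (1:Fin 11) ≠ 2 by decide)
    have s30 := aux_swap' hcliff (show (0:Fin 11) ≠ 3 by decide)
    have s31 := aux_swap' hcliff (show (1:Fin 11) ≠ 3 by decide)
    have s32 := aux_swap' hcliff (show (2:Fin 11) ≠ 3 by decide)
    have q := aux_sq' hcliff
    have t10 := aux_swap hcliff (show (0:Fin 11) ≠ 1 by decide)
    have t21 := aux_swap hcliff (show (1:Fin 11) ≠ 2 by decide)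
    have t31 := aux_swap hcliff (show (1:Fin 11) ≠ 3 by decide)
    have t32 := aux_swap hcliff (show (2:Fin 11) ≠ 3 by decide)
    have u := aux_sq hcliff
    simp only [mul_assoc, mul_neg, neg_mul, neg_neg, mul_one, s10, s20, s21, s30, s31, s32,
      q, t10, t21, t31, t32, u]
  have k67 : (P 6 * P 7) * (P 4 * P 5 * P 6 * P 7) = -(P 4 * P 5) := by
    have s54 := aux_swap' hcliff (show (4:Fin 11) ≠ 5 by decide)
    have s64 := aux_swap' hcliff (show (4:Fin 11) ≠ 6 by decide)
    have s65 := aux_swap' hcliff (show (5:Fin 11) ≠ 6 by decide)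
    have s74 := aux_swap' hcliff (show (4:Fin 11) ≠ 7 by decide)
    have s75 := aux_swap' hcliff (show (5:Fin 11) ≠ 7 by decide)
    have s76 := aux_swap' hcliff (show (6:Fin 11) ≠ 7 by decide)
    have q := aux_sq' hcliff
    have t54 := aux_swap hcliff (show (4:Fin 11) ≠ 5 by decide)
    have t76 := aux_swap hcliff (show (6:Fin 11) ≠ 7 by decide)
    have u := aux_sq hcliff
    simp only [mul_assoc, mul_neg, neg_mul, neg_neg, mul_one, s54, s64, s65, s74, s75, s76,
      q, t54, t76, u]
  set f : Fin 11 × Fin 11 → (Fin 64 → ℝ) := fun p => (P p.1 * P p.2).mulVec x with hf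
  set U : Finset (Fin 11 × Fin 11) :=
    (Finset.univ.filter fun p : Fin 11 × Fin 11 => p.1 < p.2) \
      {(1,2),(1,3),(2,3),(6,7)} with hU
  -- scalar relations for the removed pairs
  have rel : ∀ (i j k l : Fin 11) (c : ℝ),
      (P i * P j) * (P 0 * P 1 * P 2 * P 3) = c • (P k * P l) →
      f (i, j) = (ε1⁻¹ * c) • f (k, l) := by
    intro i j k l c hrel
    have step : ε1 • f (i, j) = c • f (k, l) := by
      calc ε1 • f (i, j) = (P i * P j).mulVec (ε1 • x) := (mulVec_smul _ _ _).symm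
        _ = (P i * P j).mulVec ((P 0 * P 1 * P 2 * P 3).mulVec x) := by rw [hQ1]
        _ = ((P i * P j) * (P 0 * P 1 * P 2 * P 3)).mulVec x := mulVec_mulVec _ _ _
        _ = (c • (P k * P l)).mulVec x := by rw [hrel]
        _ = c • f (k, l) := by rw [Matrix.smul_mulVec]
    calc f (i, j) = ε1⁻¹ • (ε1 • f (i, j)) := by
          rw [smul_smul, inv_mul_cancel₀ hε1ne, one_smul]
      _ = ε1⁻¹ • (c • f (k, l)) := by rw [step]
      _ = (ε1⁻¹ * c) • f (k, l) := by rw [smul_smul]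
  have rel2 : f (6, 7) = (ε2⁻¹ * (-1)) • f (4, 5) := by
    have step : ε2 • f (6, 7) = (-1 : ℝ) • f (4, 5) := by
      calc ε2 • f (6, 7) = (P 6 * P 7).mulVec (ε2 • x) := (mulVec_smul _ _ _).symm
        _ = (P 6 * P 7).mulVec ((P 4 * P 5 * P 6 * P 7).mulVec x) := by rw [hQ2]
        _ = ((P 6 * P 7) * (P 4 * P 5 * P 6 * P 7)).mulVec x := mulVec_mulVec _ _ _
        _ = ((-1 : ℝ) • (P 4 * P 5)).mulVec x := by rw [k67]; simp
        _ = (-1 : ℝ) • f (4, 5) := by rw [Matrix.smul_mulVec]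
    calc f (6, 7) = ε2⁻¹ • (ε2 • f (6, 7)) := by
          rw [smul_smul, inv_mul_cancel₀ hε2ne, one_smul]
      _ = ε2⁻¹ • ((-1 : ℝ) • f (4, 5)) := by rw [step]
      _ = (ε2⁻¹ * (-1)) • f (4, 5) := by rw [smul_smul]
  have r12 := rel 1 2 0 3 (-1) (by rw [k12]; simp)
  have r13 := rel 1 3 0 2 1 (by rw [k13]; simp)
  have r23 := rel 2 3 0 1 (-1) (by rw [k23]; simp)
  have memT : ∀ p ∈ U, f p ∈ Submodule.span ℝ (((U.image f) : Finset (Fin 64 → ℝ)) : Set (Fin 64 → ℝ)) := by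
    intro p hp
    exact Submodule.subset_span (by exact Finset.mem_coe.mpr (Finset.mem_image_of_mem f hp))
  have hsub : {v : Fin 64 → ℝ | ∃ i j : Fin 11, i < j ∧ v = (P i * P j).mulVec x} ⊆
      ↑(Submodule.span ℝ (((U.image f) : Finset (Fin 64 → ℝ)) : Set (Fin 64 → ℝ))) := by
    rintro v ⟨i, j, hij, rfl⟩
    have hv : (P i * P j).mulVec x = f (i, j) := rfl
    rw [hv]
    by_cases hmem : (i, j) ∈ U
    · exact memT _ hmem
    · have hrem : (i, j) ∈ ({(1,2),(1,3),(2,3),(6,7)} : Finset (Fin 11 × Fin 11)) := by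
        rw [hU, Finset.mem_sdiff] at hmem
        push_neg at hmem
        exact hmem (Finset.mem_filter.mpr ⟨Finset.mem_univ _, hij⟩)
      simp only [Finset.mem_insert, Finset.mem_singleton, Prod.mk.injEq] at hrem
      rcases hrem with ⟨hi, hj⟩ | ⟨hi, hj⟩ | ⟨hi, hj⟩ | ⟨hi, hj⟩ <;> subst hi <;> subst hj
      · rw [r12]; exact Submodule.smul_mem _ _ (memT _ (by decide))
      · rw [r13]; exact Submodule.smul_mem _ _ (memT _ (by decide))
      · rw [r23]; exact Submodule.smul_mem _ _ (memT _ (by decide))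
      · rw [rel2]; exact Submodule.smul_mem _ _ (memT _ (by decide))
  have hle : Submodule.span ℝ
      {v : Fin 64 → ℝ | ∃ i j : Fin 11, i < j ∧ v = (P i * P j).mulVec x} ≤
      Submodule.span ℝ (((U.image f) : Finset (Fin 64 → ℝ)) : Set (Fin 64 → ℝ)) :=
    Submodule.span_le.mpr hsub
  have h51 : U.card = 51 := by decide
  calc Module.finrank ℝ ↥(Submodule.span ℝ
        {v : Fin 64 → ℝ | ∃ i j : Fin 11, i < j ∧ v = (P i * P j).mulVec x})
      ≤ Module.finrank ℝ ↥(Submodule.span ℝ (((U.image f) : Finset (Fin 64 → ℝ)) : Set (Fin 64 → ℝ))) :=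
        Submodule.finrank_mono hle
    _ ≤ (U.image f).card := finrank_span_finset_le_card _
    _ ≤ U.card := Finset.card_image_le
    _ < 52 := by rw [h51]; norm_num
end

section
/- On ℝ⁶ with coordinates (x_1, x_2, y_1, y_2, z_1, z_2), define the three quadratic forms p_0 = x_1² + x_2² − y_1² − y_2², p_1 = 2(x_1 y_1 + x_2 y_2), p_2 = 2(x_2 y_1 − x_1 y_2). Then for every X = (x_1, x_2, y_1, y_2, z_1, z_2) ∈ ℝ⁶, (1/4)(‖∇p_0(X)‖² + ‖∇p_1(X)‖² + ‖∇p_2(X)‖²) = 3(x_1² + x_2² + y_1² + y_2²); in particular this quantity is not constant on the unit sphere of ℝ⁶. -/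
open Matrix RealInnerProductSpace

noncomputable section

private def vec6 (a b c d e f : ℝ) : EuclideanSpace ℝ (Fin 6) :=
  (WithLp.equiv 2 (Fin 6 → ℝ)).symm ![a, b, c, d, e, f]

private lemma vec6_apply₀ (a b c d e f : ℝ) : vec6 a b c d e f 0 = a := rfl
private lemma vec6_apply₁ (a b c d e f : ℝ) : vec6 a b c d e f 1 = b := rfl
private lemma vec6_apply₂ (a b c d e f : ℝ) : vec6 a b c d e f 2 = c := rfl
private lemma vec6_apply₃ (a b c d e f : ℝ) : vec6 a b c d e f 3 = d := rfl
private lemma vec6_apply₄ (a b c d e f : ℝ) : vec6 a b c d e f 4 = e := rfl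
private lemma vec6_apply₅ (a b c d e f : ℝ) : vec6 a b c d e f 5 = f := rfl

private lemma grad_eq {p : EuclideanSpace ℝ (Fin 6) → ℝ} {X v : EuclideanSpace ℝ (Fin 6)}
    (hF : HasFDerivAt p (InnerProductSpace.toDual ℝ (EuclideanSpace ℝ (Fin 6)) v) X) :
    gradient p X = v :=
  (hasGradientAt_iff_hasFDerivAt.mpr hF).gradient

private lemma norm_sq_vec6 (a b c d e f : ℝ) :
    ‖vec6 a b c d e f‖ ^ 2 = a ^ 2 + b ^ 2 + c ^ 2 + d ^ 2 + e ^ 2 + f ^ 2 := by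
  rw [← real_inner_self_eq_norm_sq, PiLp.inner_apply]
  simp [Fin.sum_univ_six, vec6_apply₀, vec6_apply₁, vec6_apply₂, vec6_apply₃,
    vec6_apply₄, vec6_apply₅]

private lemma hproj6 (X : EuclideanSpace ℝ (Fin 6)) (i : Fin 6) :
    HasFDerivAt (fun a : EuclideanSpace ℝ (Fin 6) => a i)
      (EuclideanSpace.proj (𝕜 := ℝ) i) X := by
  rw [show (fun a : EuclideanSpace ℝ (Fin 6) => a i)
      = ⇑(EuclideanSpace.proj (𝕜 := ℝ) i) from rfl]
  exact (EuclideanSpace.proj (𝕜 := ℝ) i).hasFDerivAt (x := X)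

private lemma grad0 (p₀ : EuclideanSpace ℝ (Fin 6) → ℝ)
    (hp₀ : ∀ a : EuclideanSpace ℝ (Fin 6),
      p₀ a = a 0 ^ 2 + a 1 ^ 2 - a 2 ^ 2 - a 3 ^ 2)
    (X : EuclideanSpace ℝ (Fin 6)) :
    gradient p₀ X = vec6 (2 * X 0) (2 * X 1) (-(2 * X 2)) (-(2 * X 3)) 0 0 := by
  apply grad_eq
  have h := ((((hproj6 X 0).mul (hproj6 X 0)).add ((hproj6 X 1).mul (hproj6 X 1))).sub
      ((hproj6 X 2).mul (hproj6 X 2))).sub ((hproj6 X 3).mul (hproj6 X 3))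
  have hfun : p₀ = fun a : EuclideanSpace ℝ (Fin 6) =>
      a 0 * a 0 + a 1 * a 1 - a 2 * a 2 - a 3 * a 3 :=
    funext fun a => by rw [hp₀]; ring
  rw [hfun]
  refine h.congr_fderiv ?_
  ext y
  simp [InnerProductSpace.toDual_apply_apply, PiLp.inner_apply, Fin.sum_univ_six, vec6_apply₀,
    vec6_apply₁, vec6_apply₂, vec6_apply₃, vec6_apply₄, vec6_apply₅]
  ring

private lemma grad1 (p₁ : EuclideanSpace ℝ (Fin 6) → ℝ)
    (hp₁ : ∀ a : EuclideanSpace ℝ (Fin 6), p₁ a = 2 * (a 0 * a 2 + a 1 * a 3))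
    (X : EuclideanSpace ℝ (Fin 6)) :
    gradient p₁ X = vec6 (2 * X 2) (2 * X 3) (2 * X 0) (2 * X 1) 0 0 := by
  apply grad_eq
  have h := (((hproj6 X 0).mul (hproj6 X 2)).add ((hproj6 X 1).mul (hproj6 X 3))).const_mul
      (2 : ℝ)
  have hfun : p₁ = fun a : EuclideanSpace ℝ (Fin 6) =>
      2 * (a 0 * a 2 + a 1 * a 3) := funext hp₁
  rw [hfun]
  refine h.congr_fderiv ?_
  ext y
  simp [InnerProductSpace.toDual_apply_apply, PiLp.inner_apply, Fin.sum_univ_six, vec6_apply₀,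
    vec6_apply₁, vec6_apply₂, vec6_apply₃, vec6_apply₄, vec6_apply₅]
  ring

private lemma grad2 (p₂ : EuclideanSpace ℝ (Fin 6) → ℝ)
    (hp₂ : ∀ a : EuclideanSpace ℝ (Fin 6), p₂ a = 2 * (a 1 * a 2 - a 0 * a 3))
    (X : EuclideanSpace ℝ (Fin 6)) :
    gradient p₂ X = vec6 (-(2 * X 3)) (2 * X 2) (2 * X 1) (-(2 * X 0)) 0 0 := by
  apply grad_eq
  have h := (((hproj6 X 1).mul (hproj6 X 2)).sub ((hproj6 X 0).mul (hproj6 X 3))).const_mul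
      (2 : ℝ)
  have hfun : p₂ = fun a : EuclideanSpace ℝ (Fin 6) =>
      2 * (a 1 * a 2 - a 0 * a 3) := funext hp₂
  rw [hfun]
  refine h.congr_fderiv ?_
  ext y
  simp [InnerProductSpace.toDual_apply_apply, PiLp.inner_apply, Fin.sum_univ_six, vec6_apply₀,
    vec6_apply₁, vec6_apply₂, vec6_apply₃, vec6_apply₄, vec6_apply₅]
  ring

/-- On `ℝ⁶` with coordinates `(x_1, x_2, y_1, y_2, z_1, z_2)`,
for the quadratic forms `p_0 = x_1² + x_2² − y_1² − y_2²`,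
`p_1 = 2(x_1 y_1 + x_2 y_2)`, `p_2 = 2(x_2 y_1 − x_1 y_2)` one has
`(1/4)(‖∇p_0(X)‖² + ‖∇p_1(X)‖² + ‖∇p_2(X)‖²) = 3(x_1² + x_2² + y_1² + y_2²)`
for every `X`; in particular this quantity is not constant on the unit
sphere of `ℝ⁶`. -/
theorem cp3_Mplus_22_second_fundamental_form_sum
    (p₀ p₁ p₂ : EuclideanSpace ℝ (Fin 6) → ℝ)
    (hp₀ : ∀ a : EuclideanSpace ℝ (Fin 6),
      p₀ a = a 0 ^ 2 + a 1 ^ 2 - a 2 ^ 2 - a 3 ^ 2)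
    (hp₁ : ∀ a : EuclideanSpace ℝ (Fin 6), p₁ a = 2 * (a 0 * a 2 + a 1 * a 3))
    (hp₂ : ∀ a : EuclideanSpace ℝ (Fin 6), p₂ a = 2 * (a 1 * a 2 - a 0 * a 3)) :
    (∀ X : EuclideanSpace ℝ (Fin 6),
      (1 / 4) * (‖gradient p₀ X‖ ^ 2 + ‖gradient p₁ X‖ ^ 2 + ‖gradient p₂ X‖ ^ 2) =
        3 * (X 0 ^ 2 + X 1 ^ 2 + X 2 ^ 2 + X 3 ^ 2)) ∧
    (∃ X Y : EuclideanSpace ℝ (Fin 6), ‖X‖ = 1 ∧ ‖Y‖ = 1 ∧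
      (1 / 4) * (‖gradient p₀ X‖ ^ 2 + ‖gradient p₁ X‖ ^ 2 + ‖gradient p₂ X‖ ^ 2) ≠
      (1 / 4) * (‖gradient p₀ Y‖ ^ 2 + ‖gradient p₁ Y‖ ^ 2 + ‖gradient p₂ Y‖ ^ 2)) := by
  have main : ∀ X : EuclideanSpace ℝ (Fin 6),
      (1 / 4) * (‖gradient p₀ X‖ ^ 2 + ‖gradient p₁ X‖ ^ 2 + ‖gradient p₂ X‖ ^ 2) =
        3 * (X 0 ^ 2 + X 1 ^ 2 + X 2 ^ 2 + X 3 ^ 2) := by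
    intro X
    rw [grad0 p₀ hp₀ X, grad1 p₁ hp₁ X, grad2 p₂ hp₂ X, norm_sq_vec6, norm_sq_vec6,
      norm_sq_vec6]
    ring
  refine ⟨main, EuclideanSpace.single 0 1, EuclideanSpace.single 4 1, ?_, ?_, ?_⟩
  · simp [EuclideanSpace.norm_single]
  · simp [EuclideanSpace.norm_single]
  · rw [main, main]
    simp [EuclideanSpace.single_apply]

end
end
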